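/- arXiv:2005.11942 — 5 statements merged into one kernel-verified Lean document; each statement's English description precedes it below -/
import Mathlib

section
/- For all d, γ ∈ (0,1] there exist ρ, β > 0 and n₀ such that in every (ρ, d, vvv)-dense 3-uniform hypergraph H on n ≥ n₀ vertices there exists a collection of at most 1/β pairwise vertex-disjoint β-connectable tight paths that together cover all but at most γ²·n vertices of H. -/
open Finset

/- `E` is the edge set of a 3-uniform hypergraph: every edge is a 3-element vertex set. -/
def ThreeUniform {V : Type*} (E : Finset (Finset V)) : Prop :=
  ∀ e ∈ E, e.card = 3

variable {n : ℕ}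

/- Number of pairs `(x,(y,z)) ∈ X × P` with `{x,y,z} ∈ E`. -/
open Classical in
noncomputable def eXP (E : Finset (Finset (Fin n))) (X : Finset (Fin n))
    (P : Finset (Fin n × Fin n)) : ℕ :=
  ((X ×ˢ P).filter (fun q => ({q.1, q.2.1, q.2.2} : Finset (Fin n)) ∈ E)).card

/- `H = (Fin n, E)` is `(ρ, d, ev)`-dense. -/
def EvDense (E : Finset (Finset (Fin n))) (ρ d : ℝ) : Prop :=
  ∀ (X : Finset (Fin n)) (P : Finset (Fin n × Fin n)),
    d * X.card * P.card - ρ * (n : ℝ) ^ 3 ≤ (eXP E X P : ℝ)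

/- `H = (Fin n, E)` is `(ρ, d, ev)`-dense over `(X, P)`. -/
def EvDenseOver (E : Finset (Finset (Fin n))) (ρ d : ℝ) (X : Finset (Fin n))
    (P : Finset (Fin n × Fin n)) : Prop :=
  ∀ X' ⊆ X, ∀ P' ⊆ P,
    d * X'.card * P'.card - ρ * X.card * P.card ≤ (eXP E X' P' : ℝ)

/- The set `K(P,Q)` of pairs of ordered pairs overlapping in the middle coordinate. -/
open Classical in
noncomputable def Kmid (P Q : Finset (Fin n × Fin n)) :
    Finset ((Fin n × Fin n) × Fin n × Fin n) :=
  (P ×ˢ Q).filter (fun pq => pq.1.2 = pq.2.1)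

/- Number of pairs `((x,y),(y,z)) ∈ P × Q` with `{x,y,z} ∈ E`. -/
open Classical in
noncomputable def ePQ (E : Finset (Finset (Fin n))) (P Q : Finset (Fin n × Fin n)) : ℕ :=
  ((P ×ˢ Q).filter (fun pq =>
    pq.1.2 = pq.2.1 ∧ ({pq.1.1, pq.1.2, pq.2.2} : Finset (Fin n)) ∈ E)).card

/- `H = (Fin n, E)` is `(ρ, d, ee)`-dense. -/
def EeDense (E : Finset (Finset (Fin n))) (ρ d : ℝ) : Prop :=
  ∀ P Q : Finset (Fin n × Fin n),
    d * ((Kmid P Q).card : ℝ) - ρ * (n : ℝ) ^ 3 ≤ (ePQ E P Q : ℝ)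

/- Number of triples `(x,y,z) ∈ X × Y × Z` with `{x,y,z} ∈ E`. -/
open Classical in
noncomputable def eXYZ (E : Finset (Finset (Fin n))) (X Y Z : Finset (Fin n)) : ℕ :=
  ((X ×ˢ Y ×ˢ Z).filter (fun t => ({t.1, t.2.1, t.2.2} : Finset (Fin n)) ∈ E)).card

/- `H = (Fin n, E)` is `(ρ, d, vvv)`-dense. -/
def VvvDense (E : Finset (Finset (Fin n))) (ρ d : ℝ) : Prop :=
  ∀ X Y Z : Finset (Fin n),
    d * X.card * Y.card * Z.card - ρ * (n : ℝ) ^ 3 ≤ (eXYZ E X Y Z : ℝ)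

/- The (vertex) degree of `v`: the number of edges containing `v`, i.e. the number of
pairs `{y,z}` with `{v,y,z} ∈ E`. -/
noncomputable def hdeg (E : Finset (Finset (Fin n))) (v : Fin n) : ℕ :=
  (E.filter (fun e => v ∈ e)).card

/- The codegree of `u` and `v`: the number of vertices `w` with `{u,v,w} ∈ E`. -/
open Classical in
noncomputable def codeg (E : Finset (Finset (Fin n))) (u v : Fin n) : ℕ :=
  (univ.filter (fun w => ({u, v, w} : Finset (Fin n)) ∈ E)).card

/- A tight Hamilton cycle: a cyclic ordering of all vertices in which every three
cyclically consecutive vertices form an edge. -/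
def HasTightHamiltonCycle (E : Finset (Finset (Fin n))) : Prop :=
  ∃ f : ZMod n → Fin n, Function.Bijective f ∧
    ∀ i : ZMod n, ({f i, f (i + 1), f (i + 2)} : Finset (Fin n)) ∈ E

/- The list `l` of vertices is a tight path: its entries are distinct and every three
consecutive entries form an edge. -/
def TightPath (E : Finset (Finset (Fin n))) (l : List (Fin n)) : Prop :=
  l.Nodup ∧ ∀ (i : ℕ) (h : i + 2 < l.length),
    ({l[i]'(by omega), l[i+1]'(by omega), l[i+2]'h} : Finset (Fin n)) ∈ E

/- The set `Z_{xy}` of vertices `z` with `xyz ∈ E` and `d(y,z) ≥ β n`. -/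
open Classical in
noncomputable def connSet (E : Finset (Finset (Fin n))) (β : ℝ) (x y : Fin n) :
    Finset (Fin n) :=
  univ.filter (fun z => ({x, y, z} : Finset (Fin n)) ∈ E ∧ β * n ≤ (codeg E y z : ℝ))

/- The ordered pair `(x,y)` is `β`-connectable. -/
def Connectable (E : Finset (Finset (Fin n))) (β : ℝ) (x y : Fin n) : Prop :=
  β * n ≤ ((connSet E β x y).card : ℝ)

/- A tight `(a,b)`-`(c,d)`-path is `β`-connectable if `(b,a)` and `(c,d)` are
`β`-connectable. -/
def ConnectablePath (E : Finset (Finset (Fin n))) (β : ℝ) (l : List (Fin n)) : Prop :=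
  ∃ h : 2 ≤ l.length,
    Connectable E β (l[1]'(by omega)) (l[0]'(by omega)) ∧
    Connectable E β (l[l.length - 2]'(by omega)) (l[l.length - 1]'(by omega))

/- The number of tight `(x,y)`-`(z,w)`-paths with `ℓ` inner vertices. -/
open Classical in
noncomputable def connCount (E : Finset (Finset (Fin n))) (x y z w : Fin n) (ℓ : ℕ) : ℕ :=
  (univ.filter (fun t : Fin ℓ → Fin n =>
    TightPath E ([x, y] ++ List.ofFn t ++ [z, w]))).card
/- A bipartite graph between `V₁` and `V₂` (inside an ambient graph `G`) is `(η,d)`-regular. -/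
open Classical in
def RegularPair (G : SimpleGraph (Fin n)) (V₁ V₂ : Finset (Fin n)) (η d : ℝ) : Prop :=
  ∀ X ⊆ V₁, ∀ Y ⊆ V₂,
    |(((X ×ˢ Y).filter (fun p => G.Adj p.1 p.2)).card : ℝ) - d * X.card * Y.card|
      ≤ η * V₁.card * V₂.card

/- A graph is `(ρ,d)`-dense. -/
open Classical in
def GraphDense (G : SimpleGraph (Fin n)) (ρ d : ℝ) : Prop :=
  ∀ X Y : Finset (Fin n),
    d * X.card * Y.card - ρ * (n : ℝ) ^ 2 ≤
      (((X ×ˢ Y).filter (fun p => G.Adj p.1 p.2)).card : ℝ)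

/- The bipartite graph with (ordered) edge set `P ⊆ V₁ × V₂` is `(η,ξ)`-regular. -/
open Classical in
def RegBip {N : ℕ} (P : Finset (Fin N × Fin N)) (V₁ V₂ : Finset (Fin N)) (η ξ : ℝ) : Prop :=
  ∀ X ⊆ V₁, ∀ Y ⊆ V₂,
    |((P.filter (fun p => p.1 ∈ X ∧ p.2 ∈ Y)).card : ℝ) - ξ * X.card * Y.card|
      ≤ η * V₁.card * V₂.card

/- The shadow `∂H[A,B]`: ordered pairs `(a,b) ∈ A × B` contained in a common edge. -/
open Classical in
noncomputable def shadowPairs (E : Finset (Finset (Fin n))) (A B : Finset (Fin n)) :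
    Finset (Fin n × Fin n) :=
  (A ×ˢ B).filter (fun p => ∃ e ∈ E, p.1 ∈ e ∧ p.2 ∈ e)

/- The restricted neighbourhood `N(v,P)`. -/
open Classical in
noncomputable def Nres (E : Finset (Finset (Fin n))) (v : Fin n)
    (P : Finset (Fin n × Fin n)) : Finset (Fin n × Fin n) :=
  P.filter (fun p => ({v, p.1, p.2} : Finset (Fin n)) ∈ E)

/- The number of `(P,Q)`-cherries, counted as ordered tuples `(x,y,z,w)` with
`{x,y} ∈ P`, `{z,w} ∈ Q` disjoint and `xyz, yzw ∈ E`. -/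
open Classical in
noncomputable def cherryCount (E : Finset (Finset (Fin n)))
    (P Q : Finset (Finset (Fin n))) : ℕ :=
  (univ.filter (fun t : Fin n × Fin n × Fin n × Fin n =>
    ({t.1, t.2.1} : Finset (Fin n)) ∈ P ∧
    ({t.2.2.1, t.2.2.2} : Finset (Fin n)) ∈ Q ∧
    Disjoint ({t.1, t.2.1} : Finset (Fin n)) ({t.2.2.1, t.2.2.2} : Finset (Fin n)) ∧
    ({t.1, t.2.1, t.2.2.1} : Finset (Fin n)) ∈ E ∧
    ({t.2.1, t.2.2.1, t.2.2.2} : Finset (Fin n)) ∈ E)).card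

/- The number of tight paths on `ℓ+2` vertices starting with an ordered pair from `P`
and whose last two vertices form a pair from `Q`. -/
open Classical in
noncomputable def pathCountPQ (E : Finset (Finset (Fin n))) (P : Finset (Fin n × Fin n))
    (Q : Finset (Finset (Fin n))) (ℓ : ℕ) : ℕ :=
  (univ.filter (fun t : Fin (ℓ + 2) → Fin n =>
    TightPath E (List.ofFn t) ∧ (t 0, t 1) ∈ P ∧
    ({t ⟨ℓ, by omega⟩, t ⟨ℓ + 1, by omega⟩} : Finset (Fin n)) ∈ Q)).card

/- Two disjoint unordered pairs `q`, `q'` are `(θ,L)`-turnable. -/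
def Turnable (E : Finset (Finset (Fin n))) (θ : ℝ) (L : ℕ) (q q' : Finset (Fin n)) : Prop :=
  Disjoint q q' ∧ ∀ q₁ q₂ q₁' q₂' : Fin n, q = {q₁, q₂} → q' = {q₁', q₂'} →
    ∃ ℓ : ℕ, 1 ≤ ℓ ∧ ℓ ≤ L ∧ θ * (n : ℝ) ^ ℓ ≤ (connCount E q₁ q₂ q₁' q₂' ℓ : ℝ)

/- `t` is an absorber for the triple `(v₁,v₂,v₃)`; here
`(x₁,x₂,x₃,y₁,y₂,y₃,z₁,z₂,z₃) = (t 0,…,t 8)` and `Pᵢ = (aᵢ,bᵢ,cᵢ,dᵢ)` are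
`(t 9,…,t 12)`, `(t 13,…,t 16)`, `(t 17,…,t 20)`. -/
def IsAbsorber (E : Finset (Finset (Fin n))) (v₁ v₂ v₃ : Fin n) (t : Fin 21 → Fin n) : Prop :=
  Function.Injective t ∧ (∀ i : Fin 21, t i ≠ v₁ ∧ t i ≠ v₂ ∧ t i ≠ v₃) ∧
  TightPath E [t 0, t 1, t 2, t 3, t 4, t 5, t 6, t 7, t 8] ∧
  TightPath E [t 0, t 1, t 2, t 6, t 7, t 8] ∧
  TightPath E [t 9, t 10, v₁, t 11, t 12] ∧ TightPath E [t 9, t 10, t 3, t 11, t 12] ∧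
  TightPath E [t 13, t 14, v₂, t 15, t 16] ∧ TightPath E [t 13, t 14, t 4, t 15, t 16] ∧
  TightPath E [t 17, t 18, v₃, t 19, t 20] ∧ TightPath E [t 17, t 18, t 5, t 19, t 20]

open Classical in
noncomputable def absorberCount (E : Finset (Finset (Fin n))) (v₁ v₂ v₃ : Fin n) : ℕ :=
  (univ.filter (fun t : Fin 21 → Fin n => IsAbsorber E v₁ v₂ v₃ t)).card

/- `ψ` is a copy of `C₈(4)`, the 4-blow-up of the tight cycle on 8 vertices. -/
def IsC84Copy (E : Finset (Finset (Fin n))) (ψ : Fin 8 × Fin 4 → Fin n) : Prop :=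
  Function.Injective ψ ∧ ∀ (i : Fin 8) (a b c : Fin 4),
    ({ψ (i, a), ψ (i + 1, b), ψ (i + 2, c)} : Finset (Fin n)) ∈ E

open Classical in
noncomputable def c84Count (E : Finset (Finset (Fin n))) : ℕ :=
  (univ.filter (fun ψ : Fin 8 × Fin 4 → Fin n => IsC84Copy E ψ)).card

/- Number of copies of `F` in `H`: injective maps sending edges to edges. -/
open Classical in
noncomputable def copyCount {k m : ℕ} (F : Finset (Finset (Fin k)))
    (H : Finset (Finset (Fin m))) : ℕ :=
  (univ.filter (fun ψ : Fin k → Fin m =>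
    Function.Injective ψ ∧ ∀ e ∈ F, e.image ψ ∈ H)).card

/- Number of copies of `K₄⁽³⁾⁻`, counted as ordered 4-tuples `(a,x,y,z)` of distinct
vertices with apex `a`. -/
open Classical in
noncomputable def k4mCount (E : Finset (Finset (Fin n))) : ℕ :=
  (univ.filter (fun t : Fin n × Fin n × Fin n × Fin n =>
    ([t.1, t.2.1, t.2.2.1, t.2.2.2] : List (Fin n)).Nodup ∧
    ({t.1, t.2.1, t.2.2.1} : Finset (Fin n)) ∈ E ∧
    ({t.1, t.2.1, t.2.2.2} : Finset (Fin n)) ∈ E ∧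
    ({t.1, t.2.2.1, t.2.2.2} : Finset (Fin n)) ∈ E)).card

/- Number of 5-tuples of distinct vertices `(p₁,p₂,x,p₁',p₂')` with `(p₁,p₂) ∈ P`,
`(p₁',p₂') ∈ P'` and `p₁p₂x`, `p₂xp₁'`, `xp₁'p₂'` edges. -/
open Classical in
noncomputable def midConnCount (E : Finset (Finset (Fin n)))
    (P P' : Finset (Fin n × Fin n)) : ℕ :=
  (univ.filter (fun t : Fin n × Fin n × Fin n × Fin n × Fin n =>
    ([t.1, t.2.1, t.2.2.1, t.2.2.2.1, t.2.2.2.2] : List (Fin n)).Nodup ∧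
    (t.1, t.2.1) ∈ P ∧ (t.2.2.2.1, t.2.2.2.2) ∈ P' ∧
    ({t.1, t.2.1, t.2.2.1} : Finset (Fin n)) ∈ E ∧
    ({t.2.1, t.2.2.1, t.2.2.2.1} : Finset (Fin n)) ∈ E ∧
    ({t.2.2.1, t.2.2.2.1, t.2.2.2.2} : Finset (Fin n)) ∈ E)).card

/-!
Inside a vertex set `U` with more than `γ²n` vertices, vvv-density yields more than `L n²` edges
of `H[U]`, where `L ≈ βn`. Deleting, while possible, all edges through a pair of codegree below
`L` costs fewer than `L` edges per pair, hence fewer than `L n²` edges in total, so a nonempty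
subhypergraph survives in which every pair inside an edge has codegree at least `L`. There a
tight path on `L` vertices grows greedily, and all its pairs are `β`-connectable since every edge
through them again has pairs of codegree at least `L ≥ βn`. Removing such paths one at a time
until at most `γ²n` vertices remain uses at most `n / L ≤ 1 / β` paths.
-/

namespace Finset

theorem exists_eq_triple_of_card_eq_three {α : Type*} [DecidableEq α] {e : Finset α}
    (he : #e = 3) {a b : α} (hab : a ≠ b) (ha : a ∈ e) (hb : b ∈ e) :
    ∃ c, e = {a, b, c} := by
  have hb' : b ∈ e.erase a := mem_erase.2 ⟨hab.symm, hb⟩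
  obtain ⟨c, hc⟩ := card_eq_one.1 (by rw [card_erase_of_mem hb', card_erase_of_mem ha, he] :
    #((e.erase a).erase b) = 1)
  exact ⟨c, by rw [← hc, insert_erase hb', insert_erase ha]⟩

end Finset

theorem codeg_mono {E F : Finset (Finset (Fin n))} (hEF : E ⊆ F) (a b : Fin n) :
    codeg E a b ≤ codeg F a b := by
  unfold codeg
  exact card_le_card fun w hw => by simp only [mem_filter] at hw ⊢; exact ⟨hw.1, hEF hw.2⟩

theorem card_filter_mem_mem_le_codeg {F : Finset (Finset (Fin n))} (hu : ThreeUniform F)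
    {a b : Fin n} (hab : a ≠ b) : #{e ∈ F | a ∈ e ∧ b ∈ e} ≤ codeg F a b := by
  classical
  unfold codeg
  refine le_trans (card_le_card fun e he => ?_) (card_image_le (f := fun w => {a, b, w}))
  obtain ⟨heF, ha, hb⟩ := mem_filter.1 he
  obtain ⟨c, rfl⟩ := exists_eq_triple_of_card_eq_three (hu _ heF) hab ha hb
  exact mem_image.2 ⟨c, by simpa using heF, rfl⟩

theorem ThreeUniform.ne_of_triple_mem {F : Finset (Finset (Fin n))} (hu : ThreeUniform F)
    {a b c : Fin n} (h : ({a, b, c} : Finset (Fin n)) ∈ F) : b ≠ c := by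
  rintro rfl
  have := hu _ h
  have := card_le_two (a := a) (b := b)
  simp_all

theorem ThreeUniform.mono {E F : Finset (Finset (Fin n))} (hF : ThreeUniform F) (hEF : E ⊆ F) :
    ThreeUniform E :=
  fun e he => hF e (hEF he)

theorem TightPath.mono {E F : Finset (Finset (Fin n))} {l : List (Fin n)} (hl : TightPath E l)
    (hEF : E ⊆ F) : TightPath F l :=
  ⟨hl.1, fun i hi => hEF (hl.2 i hi)⟩

theorem TightPath.cons {E : Finset (Finset (Fin n))} {z a b : Fin n} {l : List (Fin n)}
    (h : TightPath E (a :: b :: l)) (hz : z ∉ a :: b :: l)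
    (he : ({z, a, b} : Finset (Fin n)) ∈ E) : TightPath E (z :: a :: b :: l) := by
  refine ⟨List.nodup_cons.2 ⟨hz, h.1⟩, fun i hi => ?_⟩
  cases i with
  | zero => exact he
  | succ i => exact h.2 i (by simp at hi ⊢; omega)

def MinCodegree (F : Finset (Finset (Fin n))) (t : ℕ) : Prop :=
  ∀ e ∈ F, ∀ a ∈ e, ∀ b ∈ e, a ≠ b → t ≤ codeg F a b

def coveredPairs (F : Finset (Finset (Fin n))) : Finset (Fin n × Fin n) :=
  F.biUnion fun e => e ×ˢ e

theorem card_coveredPairs_le (F : Finset (Finset (Fin n))) : #(coveredPairs F) ≤ n * n := by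
  simpa using card_le_univ (coveredPairs F)

/-- Repeatedly delete all edges through a pair of low codegree. Each deletion loses fewer than
`t` edges and at least one covered pair, whence the potential `#F - t * #(coveredPairs F)`
never decreases. -/
theorem exists_minCodegree_subset (t : ℕ) {F : Finset (Finset (Fin n))}
    (hu : ThreeUniform F) :
    ∃ F' ⊆ F, MinCodegree F' t ∧
      #F + t * #(coveredPairs F') ≤ #F' + t * #(coveredPairs F) := by
  induction F using Finset.strongInduction with
  | H F ih =>
    by_cases hF : MinCodegree F t
    · exact ⟨F, subset_rfl, hF, le_rfl⟩
    simp only [MinCodegree, not_forall, not_le] at hF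
    obtain ⟨e, he, a, ha, b, hb, hab, hlow⟩ := hF
    set F₁ := {e ∈ F | ¬(a ∈ e ∧ b ∈ e)}
    have hF₁ : F₁ ⊂ F := filter_ssubset.2 ⟨e, he, by simp [ha, hb]⟩
    obtain ⟨F', hF'F₁, hF', hpot⟩ :=
      ih F₁ hF₁ fun e he => hu e (filter_subset _ _ he)
    have hsplit : #{e ∈ F | a ∈ e ∧ b ∈ e} + #F₁ = #F :=
      card_filter_add_card_filter_not _
    have hremoved := card_filter_mem_mem_le_codeg hu hab
    have hpairs : #(coveredPairs F₁) + 1 ≤ #(coveredPairs F) := by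
      refine card_lt_card ⟨biUnion_subset_biUnion_of_subset_left _ hF₁.1, fun h => ?_⟩
      obtain ⟨e', he', hab'⟩ :=
        mem_biUnion.1 (h (mem_biUnion.2 ⟨e, he, (mem_product (p := (a, b))).2 ⟨ha, hb⟩⟩))
      exact (mem_filter.1 he').2 (mem_product.1 hab')
    have := Nat.mul_le_mul_left t hpairs
    refine ⟨F', hF'F₁.trans (filter_subset _ _), hF', ?_⟩
    linarith

theorem exists_nonempty_minCodegree_subset {t : ℕ} {F : Finset (Finset (Fin n))}
    (hu : ThreeUniform F) (hF : t * (n * n) < #F) :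
    ∃ F' ⊆ F, F'.Nonempty ∧ MinCodegree F' t := by
  obtain ⟨F', hF'F, hF', hpot⟩ := exists_minCodegree_subset t hu
  have := Nat.mul_le_mul_left t (card_coveredPairs_le F)
  exact ⟨F', hF'F, card_pos.1 (by nlinarith), hF'⟩

/-- A tight path is extended at its front: the first pair has more than `#l` common neighbours,
so one of them lies off the path. -/
theorem exists_tightPath_of_minCodegree {F : Finset (Finset (Fin n))} {t : ℕ}
    (hu : ThreeUniform F) (hF : MinCodegree F t) (hne : F.Nonempty) {L : ℕ} (hL : 3 ≤ L)
    (hLt : L ≤ t) : ∃ l : List (Fin n), l.length = L ∧ TightPath F l := by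
  induction L, hL using Nat.le_induction with
  | base =>
    obtain ⟨e, he⟩ := hne
    obtain ⟨x, y, z, hxy, hxz, hyz, rfl⟩ := card_eq_three.1 (hu e he)
    refine ⟨[x, y, z], rfl, by simp [hxy, hxz, hyz], fun i hi => ?_⟩
    obtain rfl : i = 0 := by simp at hi; omega
    exact he
  | succ L hL ih =>
    obtain ⟨l, hlen, hl⟩ := ih (by omega)
    rcases l with _ | ⟨a, _ | ⟨b, _ | ⟨c, l'⟩⟩⟩ <;> try (simp at hlen; omega)
    have habc : ({a, b, c} : Finset (Fin n)) ∈ F := hl.2 0 (by simp)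
    have hab : a ≠ b := by have := hl.1; simp_all
    have hcodeg : #(a :: b :: c :: l').toFinset < codeg F a b := calc
      _ ≤ L := hlen ▸ List.toFinset_card_le _
      _ < t := by omega
      _ ≤ codeg F a b := hF _ habc a (by simp) b (by simp) hab
    obtain ⟨z, hzF, hzl⟩ := exists_mem_notMem_of_card_lt_card hcodeg
    refine ⟨z :: a :: b :: c :: l', by simp [← hlen], hl.cons (by simpa using hzl) ?_⟩
    have hzF : ({a, b, z} : Finset (Fin n)) ∈ F := by simpa using hzF
    rwa [insert_comm z, pair_comm z]

theorem connectable_of_minCodegree {E F : Finset (Finset (Fin n))} (hFE : F ⊆ E)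
    (hu : ThreeUniform F) {t : ℕ} (hF : MinCodegree F t) {β : ℝ} (hβ : β * n ≤ t)
    {e : Finset (Fin n)} (he : e ∈ F) {a b : Fin n} (ha : a ∈ e) (hb : b ∈ e)
    (hab : a ≠ b) :
    Connectable E β a b := by
  have hsub : ({w | ({a, b, w} : Finset (Fin n)) ∈ F} : Finset (Fin n)) ⊆
      connSet E β a b := by
    intro w hw
    have hw : ({a, b, w} : Finset (Fin n)) ∈ F := by simpa using hw
    have hbw := hF _ hw b (by simp) w (by simp) (hu.ne_of_triple_mem hw)
    simp only [connSet, mem_filter, mem_univ, true_and]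
    exact ⟨hFE hw, hβ.trans (by exact_mod_cast hbw.trans (codeg_mono hFE b w))⟩
  exact hβ.trans (by exact_mod_cast (hF e he a ha b hb hab).trans (card_le_card hsub))

theorem TightPath.connectablePath {E F : Finset (Finset (Fin n))} {β : ℝ} {l : List (Fin n)}
    (hl : TightPath F l) (hlen : 3 ≤ l.length)
    (hconn : ∀ e ∈ F, ∀ a ∈ e, ∀ b ∈ e, a ≠ b → Connectable E β a b) :
    ConnectablePath E β l := by
  have hne {i j : ℕ} (hi : i < l.length) (hj : j < l.length) (hij : i ≠ j) : l[i] ≠ l[j] :=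
    fun h => hij ((hl.1.getElem_inj_iff).1 h)
  refine ⟨by omega,
    hconn _ (hl.2 0 (by omega)) _ (by simp) _ (by simp) (hne _ _ (by omega)), ?_⟩
  have hlast := hl.2 (l.length - 3) (by omega)
  simp only [show l.length - 3 + 1 = l.length - 2 by omega,
    show l.length - 3 + 2 = l.length - 1 by omega] at hlast
  exact hconn _ hlast _ (by simp) _ (by simp) (hne _ _ (by omega))

theorem TightPath.exists_mem_edge {E : Finset (Finset (Fin n))} {l : List (Fin n)}
    (hl : TightPath E l) (hlen : 3 ≤ l.length) {v : Fin n} (hv : v ∈ l) :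
    ∃ e ∈ E, v ∈ e := by
  obtain ⟨i, hi, rfl⟩ := List.mem_iff_getElem.1 hv
  obtain ⟨j, hj, hij⟩ : ∃ j, ∃ hj : j + 2 < l.length, i = j ∨ i = j + 1 ∨ i = j + 2 :=
    if h : i + 2 < l.length then ⟨i, h, by omega⟩ else ⟨l.length - 3, by omega, by omega⟩
  refine ⟨_, hl.2 j hj, ?_⟩
  rcases hij with rfl | rfl | rfl <;> simp

/-- Each edge inside `U` accounts for at most `3 ^ 3` of the triples counted by `eXYZ`. -/
theorem eXYZ_le_card_edges_subset {E : Finset (Finset (Fin n))} (hu : ThreeUniform E)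
    (U : Finset (Fin n)) : eXYZ E U U U ≤ 27 * #{e ∈ E | e ⊆ U} := by
  classical
  unfold eXYZ
  refine card_le_mul_card_image_of_maps_to (f := fun q => {q.1, q.2.1, q.2.2})
    (fun q hq => ?_) 27 fun e he => ?_
  · simp only [mem_filter, mem_product] at hq ⊢
    refine ⟨hq.2, ?_⟩
    simp [insert_subset_iff, hq.1.1, hq.1.2.1, hq.1.2.2]
  · refine (card_le_card (t := e ×ˢ e ×ˢ e) fun q hq => ?_).trans_eq ?_
    · obtain ⟨-, rfl⟩ := mem_filter.1 hq
      simp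
    · simp [hu e (mem_filter.1 he).1]

theorem exists_connectable_tightPath_subset {E : Finset (Finset (Fin n))} {ρ d β : ℝ}
    (hu : ThreeUniform E) (hd : VvvDense E ρ d) {L : ℕ} (hL : 3 ≤ L) (hβL : β * n ≤ L)
    {U : Finset (Fin n)} (hU : 27 * L * n ^ 2 < d * #U ^ 3 - ρ * n ^ 3) :
    ∃ l : List (Fin n), l.length = L ∧ TightPath E l ∧ ConnectablePath E β l ∧
      ∀ v ∈ l, v ∈ U := by
  set EU := {e ∈ E | e ⊆ U}
  have hEUE : EU ⊆ E := filter_subset _ _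
  have hEU : L * (n * n) < #EU := by
    have hdense := hd U U U
    have hcount : (eXYZ E U U U : ℝ) ≤ 27 * #EU := by
      exact_mod_cast eXYZ_le_card_edges_subset hu U
    have : (L : ℝ) * (n * n) < #EU := by linarith
    exact_mod_cast this
  obtain ⟨F, hFEU, hFne, hF⟩ := exists_nonempty_minCodegree_subset (hu.mono hEUE) hEU
  have hFE := hFEU.trans hEUE
  obtain ⟨l, hlen, hl⟩ := exists_tightPath_of_minCodegree (hu.mono hFE) hF hFne hL le_rfl
  refine ⟨l, hlen, hl.mono hFE, hl.connectablePath (hlen ▸ hL) fun e he a ha b hb hab =>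
    connectable_of_minCodegree hFE (hu.mono hFE) hF hβL he ha hb hab, fun v hv => ?_⟩
  obtain ⟨e, he, hve⟩ := hl.exists_mem_edge (hlen ▸ hL) hv
  exact (mem_filter.1 (hFEU he)).2 hve

theorem exists_disjoint_lists_cover {α : Type*} [DecidableEq α] (P : List α → Prop) {L : ℕ}
    (hL : 0 < L) (r : ℝ)
    (hP : ∀ U : Finset α, r < #U →
      ∃ l : List α, l.length = L ∧ l.Nodup ∧ P l ∧ ∀ v ∈ l, v ∈ U)
    (U : Finset α) :
    ∃ Ps : Finset (List α), (∀ l ∈ Ps, P l) ∧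
      (∀ l ∈ Ps, ∀ l' ∈ Ps, l ≠ l' → ∀ v : α, v ∈ l → v ∉ l') ∧
      (∀ l ∈ Ps, ∀ v ∈ l, v ∈ U) ∧ #Ps * L ≤ #U ∧
      (#{v ∈ U | ∀ l ∈ Ps, v ∉ l} : ℝ) ≤ r := by
  induction U using Finset.strongInduction with
  | H U ih =>
    by_cases hU : r < #U
    swap
    · exact ⟨∅, by simp, by simp, by simp, by simp, by simpa using hU⟩
    obtain ⟨l, hlen, hnodup, hPl, hlU⟩ := hP U hU
    obtain ⟨v₀, hv₀⟩ := List.exists_mem_of_length_pos (hlen ▸ hL)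
    have hlU' : l.toFinset ⊆ U := fun v hv => hlU v (List.mem_toFinset.1 hv)
    obtain ⟨Ps, hPs, hdisj, hPsU, hcard, hrest⟩ :=
      ih (U \ l.toFinset) (sdiff_ssubset hlU' ⟨v₀, List.mem_toFinset.2 hv₀⟩)
    have hoff : ∀ l' ∈ Ps, ∀ v ∈ l', v ∉ l := fun l' hl' v hv hvl =>
      (mem_sdiff.1 (hPsU l' hl' v hv)).2 (List.mem_toFinset.2 hvl)
    have hlPs : l ∉ Ps := fun h => hoff l h v₀ hv₀ hv₀
    refine ⟨insert l Ps, ?_, ?_, ?_, ?_, ?_⟩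
    · simpa [hPl] using hPs
    · simp only [mem_insert]
      rintro l₁ (rfl | hl₁) l₂ (rfl | hl₂) hne v hv₁ hv₂
      exacts [hne rfl, hoff _ hl₂ v hv₂ hv₁, hoff _ hl₁ v hv₁ hv₂,
        hdisj _ hl₁ _ hl₂ hne v hv₁ hv₂]
    · simp only [mem_insert, forall_eq_or_imp]
      exact ⟨hlU, fun l' hl' v hv => (mem_sdiff.1 (hPsU l' hl' v hv)).1⟩
    · have hsd := card_sdiff_of_subset hlU'
      have hle := card_le_card hlU'
      rw [List.toFinset_card_of_nodup hnodup, hlen] at hsd hle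
      rw [card_insert_of_notMem hlPs, add_mul, one_mul]
      omega
    · refine le_trans (by gcongr; intro v hv; simp_all) hrest

open Classical in
theorem statement_2 :
    ∀ d γ : ℝ, 0 < d → d ≤ 1 → 0 < γ → γ ≤ 1 →
      ∃ ρ β : ℝ, 0 < ρ ∧ 0 < β ∧ ∃ n₀ : ℕ, ∀ n : ℕ, n₀ ≤ n →
        ∀ E : Finset (Finset (Fin n)), ThreeUniform E → VvvDense E ρ d →
          ∃ Ps : Finset (List (Fin n)),
            (Ps.card : ℝ) ≤ 1 / β ∧
            (∀ l ∈ Ps, TightPath E l ∧ ConnectablePath E β l) ∧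
            (∀ l ∈ Ps, ∀ l' ∈ Ps, l ≠ l' → ∀ v : Fin n, v ∈ l → v ∉ l') ∧
            ((univ.filter (fun v : Fin n => ∀ l ∈ Ps, v ∉ l)).card : ℝ) ≤ γ ^ 2 * n := by
  intro d γ hd _ hγ _
  set c := d * γ ^ 6
  have hc : 0 < c := by positivity
  -- With `β = c / 100` and `n ≥ 1000 / c`, paths on `L < βn + 4` vertices satisfy
  -- `27 L n² < (c / 2) n³`, which is what the extraction in a set of `γ²n` vertices needs.
  refine ⟨c / 2, c / 100, by positivity, by positivity, ⌈1000 / c⌉₊,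
    fun n hn E hu hE => ?_⟩
  have hcn : 1000 ≤ c * n := by rw [← div_le_iff₀' hc]; exact Nat.ceil_le.1 hn
  have hn : (0 : ℝ) < n := pos_of_mul_pos_right (by linarith) hc.le
  set L := ⌈c / 100 * n⌉₊ + 3
  have hL : c / 100 * n ≤ L ∧ (L : ℝ) < c / 100 * n + 4 := by
    have := Nat.ceil_lt_add_one (by positivity : 0 ≤ c / 100 * n)
    have := Nat.le_ceil (c / 100 * n)
    constructor <;> push_cast [L] <;> linarith
  have hpath (U : Finset (Fin n)) (hU : γ ^ 2 * n < #U) : ∃ l : List (Fin n), l.length = L ∧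
      l.Nodup ∧ (TightPath E l ∧ ConnectablePath E (c / 100) l) ∧ ∀ v ∈ l, v ∈ U := by
    have hU3 : γ ^ 6 * n ^ 3 ≤ (#U : ℝ) ^ 3 := by
      rw [show γ ^ 6 * (n : ℝ) ^ 3 = (γ ^ 2 * n) ^ 3 by ring]
      exact pow_le_pow_left₀ (by positivity) hU.le 3
    have hn2 : (0 : ℝ) < n ^ 2 := by positivity
    obtain ⟨l, hlen, hl, hlc, hlU⟩ :=
      exists_connectable_tightPath_subset (U := U) hu hE (by omega) hL.1 (by nlinarith)
    exact ⟨l, hlen, hl.1, ⟨hl, hlc⟩, hlU⟩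
  obtain ⟨Ps, hPs, hdisj, -, hcard, hrest⟩ :=
    exists_disjoint_lists_cover _ (by omega : 0 < L) _ hpath univ
  refine ⟨Ps, ?_, hPs, hdisj, by simpa using hrest⟩
  have hcard : (#Ps : ℝ) * L ≤ n := by exact_mod_cast (by simpa using hcard)
  rw [le_div_iff₀ (by positivity)]
  nlinarith
end

section
/- For every ξ > 0 and all positive integers k, ℓ there exist ζ > 0 and n₀ such that the following holds. Let F and F' be 3-uniform hypergraphs with |V(F)| = k and |V(F')| = ℓ such that there is a homomorphism from F' to F. If a 3-uniform hypergraph H on n ≥ n₀ vertices contains at least ξ·n^k copies of F, then H contains at least ζ·n^ℓ copies of F'. -/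
open Finset

variable {n : ℕ}

/-!
Blow up `F` by replacing each vertex `v` with the layer `{v} × Fin ℓ`. A homomorphism
`φ : F' → F` is injective on edges (both are 3-uniform), so `v ↦ (φ v, v)` embeds `F'` in the
blow-up, and it suffices to count homomorphisms from the blow-up. Grow the blow-up from a single
layer by cloning one vertex at a time: by Cauchy–Schwarz each cloning at most squares the
homomorphism density, which therefore stays at least `ξ ^ 2 ^ (k * ℓ)`. Finally, only
`O(n ^ (ℓ - 1))` maps `Fin ℓ → Fin n` are not injective.
-/

open Function

section Counting

variable {ι κ β : Type*} [Fintype ι] [Fintype κ] [Fintype β]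

theorem sq_card_le_card_mul_card_filter_eq {X Y : Type*} [Fintype Y] [DecidableEq Y]
    (f : X → Y) (s : Finset X) :
    #s ^ 2 ≤ Fintype.card Y * #{p ∈ s ×ˢ s | f p.1 = f p.2} := by
  have hs : #s = ∑ y, #{x ∈ s | f x = y} :=
    card_eq_sum_card_fiberwise fun x _ => mem_univ (f x)
  have hpairs : #{p ∈ s ×ˢ s | f p.1 = f p.2} = ∑ y, #{x ∈ s | f x = y} ^ 2 := by
    rw [card_eq_sum_card_fiberwise fun p _ => mem_univ (f p.1)]
    refine sum_congr rfl fun y _ => ?_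
    rw [sq, ← card_product]
    congr 1
    ext ⟨a, b⟩
    simp only [mem_filter, mem_product]
    constructor
    · rintro ⟨⟨⟨ha, hb⟩, hab⟩, rfl⟩
      exact ⟨⟨ha, rfl⟩, hb, hab.symm⟩
    · rintro ⟨⟨ha, rfl⟩, hb, hab⟩
      exact ⟨⟨⟨ha, hb⟩, hab.symm⟩, rfl⟩
  rw [hs, hpairs]
  exact sq_sum_le_card_mul_sum_sq

theorem card_filter_comp_eq [DecidableEq ι] [DecidableEq κ] {e : κ → ι} (he : Injective e)
    (p : (κ → β) → Prop) [DecidablePred p] :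
    #{g : ι → β | p (g ∘ e)} =
      #{ψ | p ψ} * Fintype.card β ^ (Fintype.card ι - Fintype.card κ) := by
  let σ : κ ⊕ {i // i ∉ Set.range e} ≃ ι :=
    (Equiv.sumCongr (Equiv.ofInjective e he) (Equiv.refl _)).trans (Equiv.sumCompl _)
  let E : (ι → β) ≃ (κ → β) × ({i // i ∉ Set.range e} → β) :=
    (Equiv.arrowCongr σ (Equiv.refl β)).symm.trans (Equiv.sumArrowEquivProdArrow _ _ _)
  have hC : Fintype.card {i // i ∉ Set.range e} = Fintype.card ι - Fintype.card κ := by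
    rw [Fintype.card_subtype_compl, ← Set.card_range_of_injective he]
  have hE : ∀ g, (E g).1 = g ∘ e := fun g => rfl
  rw [card_equiv E (t := ({ψ | p ψ} : Finset _) ×ˢ univ) fun g => by simp [hE]]
  rw [card_product, card_univ, Fintype.card_fun, hC]

theorem sq_card_filter_le_card_filter_update [DecidableEq ι] [DecidableEq β]
    (S : (ι → β) → Prop) [DecidablePred S] {u w : ι} (huw : u ≠ w)
    (hS : ∀ g y, S g → S (update g w y)) :
    #{g | S g} ^ 2 ≤ Fintype.card β ^ Fintype.card ι * #{g | S g ∧ S (update g u (g w))} := by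
  set s : Finset (ι → β) := {g | S g}
  let ρ : (ι → β) → ({j // j ≠ u} → β) := fun g j => g j
  have hρ : ∀ {g g' : ι → β}, ρ g = ρ g' → update g u (g' u) = g' := fun h => by
    funext j
    by_cases hj : j = u
    · subst hj; simp
    · simpa [hj] using congrFun h ⟨j, hj⟩
  -- `(g, g')` agreeing off `u` is recovered from `update g w (g' u)` and `g w`
  have hpairs : #{p ∈ s ×ˢ s | ρ p.1 = ρ p.2} ≤
      #{g | S g ∧ S (update g u (g w))} * Fintype.card β := by
    rw [← card_univ, ← card_product]
    refine card_le_card_of_injOn (fun p => (update p.1 w (p.2 u), p.1 w)) ?_ ?_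
    · rintro ⟨g, g'⟩ hp
      simp only [s, coe_filter, mem_product, mem_filter, mem_univ, true_and,
        Set.mem_ofPred_eq] at hp
      obtain ⟨⟨hg, hg'⟩, hgg'⟩ := hp
      simp only [coe_product, coe_filter, mem_univ, true_and, Set.mem_prod, Set.mem_ofPred_eq,
        coe_univ, Set.mem_univ, and_true]
      refine ⟨hS g _ hg, ?_⟩
      rw [update_self, ← update_comm huw, hρ hgg']
      exact hS g' _ hg'
    · rintro ⟨g₁, g₁'⟩ hp₁ ⟨g₂, g₂'⟩ hp₂ h
      simp only [s, coe_filter, mem_product, mem_filter, mem_univ, true_and,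
        Set.mem_ofPred_eq] at hp₁ hp₂
      simp only [Prod.mk.injEq] at h ⊢
      obtain ⟨h, hw⟩ := h
      have hg : g₁ = g₂ := by
        funext j
        by_cases hj : j = w
        · rw [hj, hw]
        · simpa [hj] using congrFun h j
      refine ⟨hg, ?_⟩
      have hu : g₁' u = g₂' u := by simpa using congrFun h w
      rw [← hρ hp₁.2, ← hρ hp₂.2, hg, hu]
  have hcard : Fintype.card ({j // j ≠ u} → β) * Fintype.card β =
      Fintype.card β ^ Fintype.card ι := by
    rw [Fintype.card_fun, Fintype.card_subtype_compl, Fintype.card_subtype_eq, ← pow_succ,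
      Nat.sub_add_cancel (Fintype.card_pos_iff.2 ⟨u⟩)]
  calc #s ^ 2
      ≤ Fintype.card ({j // j ≠ u} → β) * #{p ∈ s ×ˢ s | ρ p.1 = ρ p.2} :=
        sq_card_le_card_mul_card_filter_eq ρ _
    _ ≤ Fintype.card ({j // j ≠ u} → β) *
          (#{g | S g ∧ S (update g u (g w))} * Fintype.card β) :=
        Nat.mul_le_mul_left _ hpairs
    _ = _ := by rw [← hcard]; ring

theorem card_filter_apply_eq_apply_le [DecidableEq κ] [DecidableEq β] {a b : κ} (hab : a ≠ b) :
    #{ψ : κ → β | ψ a = ψ b} ≤ Fintype.card β ^ (Fintype.card κ - 1) := by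
  have hcard : Fintype.card ({j // j ≠ b} → β) = Fintype.card β ^ (Fintype.card κ - 1) := by
    rw [Fintype.card_fun, Fintype.card_subtype_compl, Fintype.card_subtype_eq]
  rw [← hcard, ← card_univ]
  refine card_le_card_of_injOn (fun ψ j => ψ j) (fun _ _ => mem_univ _) ?_
  intro ψ hψ ψ' hψ' h
  simp only [coe_filter, mem_univ, true_and, Set.mem_ofPred_eq] at hψ hψ'
  funext j
  by_cases hj : j = b
  · rw [hj, ← hψ, ← hψ']
    exact congrFun h ⟨a, hab⟩
  · exact congrFun h ⟨j, hj⟩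

theorem card_filter_not_injective_le [DecidableEq κ] [DecidableEq β] :
    #{ψ : κ → β | ¬Injective ψ} ≤
      Fintype.card κ ^ 2 * Fintype.card β ^ (Fintype.card κ - 1) := by
  have hsub : ({ψ : κ → β | ¬Injective ψ} : Finset _) ⊆
      (univ : Finset κ).offDiag.biUnion fun p => {ψ | ψ p.1 = ψ p.2} := by
    intro ψ hψ
    obtain ⟨a, b, hψab, hab⟩ := not_injective_iff.1 (mem_filter.1 hψ).2
    exact mem_biUnion.2 ⟨(a, b), by simpa using hab, by simpa using hψab⟩
  calc #{ψ : κ → β | ¬Injective ψ}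
      ≤ ∑ p ∈ (univ : Finset κ).offDiag, #{ψ : κ → β | ψ p.1 = ψ p.2} :=
        (card_le_card hsub).trans card_biUnion_le
    _ ≤ ∑ _p ∈ (univ : Finset κ).offDiag, Fintype.card β ^ (Fintype.card κ - 1) :=
        sum_le_sum fun p hp => card_filter_apply_eq_apply_le (mem_offDiag.1 hp).2.2
    _ ≤ Fintype.card κ ^ 2 * Fintype.card β ^ (Fintype.card κ - 1) := by
        rw [sum_const, smul_eq_mul, offDiag_card, card_univ, sq]
        exact Nat.mul_le_mul_right _ (Nat.sub_le _ _)

end Counting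

section Blowup

variable {α γ β : Type*} [DecidableEq β]

def IsHypergraphHom (F : Finset (Finset α)) (H : Finset (Finset β)) (ψ : α → β) : Prop :=
  ∀ e ∈ F, e.image ψ ∈ H

/-- `g` is a homomorphism into `H` from the subhypergraph induced on `D` of the blow-up of `F`
in which every vertex `v` is replaced by the layer `{v} × γ`. -/
def IsBlowupHomOn (F : Finset (Finset α)) (H : Finset (Finset β)) (D : Set (α × γ))
    (g : α × γ → β) : Prop :=
  ∀ e ∈ F, ∀ f : α → γ, (∀ v ∈ e, (v, f v) ∈ D) → e.image (fun v => g (v, f v)) ∈ H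

instance (F : Finset (Finset α)) (H : Finset (Finset β)) :
    DecidablePred (IsHypergraphHom F H) :=
  fun ψ => inferInstanceAs (Decidable (∀ e ∈ F, e.image ψ ∈ H))

variable {F : Finset (Finset α)} {H : Finset (Finset β)} {D : Set (α × γ)} {g : α × γ → β}

theorem IsHypergraphHom.isBlowupHomOn_layer {i₀ : γ} (hg : IsHypergraphHom F H (g ⟨·, i₀⟩)) :
    IsBlowupHomOn F H {p | p.2 = i₀} g := by
  intro e he f hf
  convert hg e he using 1
  exact image_congr fun v hv => by simp only [show f v = i₀ from hf v hv]

theorem IsBlowupHomOn.update_of_notMem [DecidableEq α] [DecidableEq γ] {a : α × γ} (ha : a ∉ D)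
    (hg : IsBlowupHomOn F H D g) (y : β) : IsBlowupHomOn F H D (update g a y) := by
  intro e he f hf
  convert hg e he f hf using 1
  exact image_congr fun v hv => update_of_ne (fun h : (v, f v) = a => ha (h ▸ hf v hv)) _ _

theorem IsBlowupHomOn.insert [DecidableEq α] [DecidableEq γ] {v : α} {i j : γ} (hi : (v, i) ∈ D)
    (hg : IsBlowupHomOn F H D g)
    (hg' : IsBlowupHomOn F H D (update g (v, i) (g (v, j)))) :
    IsBlowupHomOn F H (insert (v, j) D) g := by
  intro e he f hf
  by_cases hvj : v ∈ e ∧ f v = j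
  · have hf' : ∀ u ∈ e, (u, update f v i u) ∈ D := by
      intro u hu
      by_cases huv : u = v
      · subst huv; simpa using hi
      · simpa [huv, update_of_ne huv] using hf u hu
    convert hg' e he _ hf' using 1
    refine image_congr fun u hu => ?_
    by_cases huv : u = v
    · subst huv; simp [hvj.2]
    · simp [huv]
  · refine hg e he f fun u hu => (Set.mem_insert_iff.1 (hf u hu)).resolve_left fun h => ?_
    simp only [Prod.mk.injEq] at h
    exact hvj ⟨h.1 ▸ hu, h.1 ▸ h.2⟩

theorem IsBlowupHomOn.isHypergraphHom_comp [DecidableEq α] [Nonempty γ]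
    {F' : Finset (Finset γ)} {φ : γ → α} (hg : IsBlowupHomOn F H Set.univ g)
    (hφ : IsHypergraphHom F' F φ) (hφinj : ∀ e ∈ F', Set.InjOn φ e) :
    IsHypergraphHom F' H (fun v => g (φ v, v)) := by
  intro e he
  have h := hg _ (hφ e he) (invFunOn φ e) fun _ _ => Set.mem_univ _
  rw [image_image] at h
  convert h using 1
  exact image_congr fun v hv => by simp [(hφinj e he).leftInvOn_invFunOn hv]

end Blowup

theorem sq_mul_le_of_mul_le_of_sq_le_mul {a N x y : ℝ} (ha : 0 ≤ a) (hN : 0 ≤ N) (hy : 0 ≤ y)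
    (hx : a * N ≤ x) (hxy : x ^ 2 ≤ N * y) : a ^ 2 * N ≤ y := by
  rcases hN.eq_or_lt with rfl | hN
  · simpa using hy
  · refine le_of_mul_le_mul_left ?_ hN
    nlinarith [mul_nonneg ha hN.le]

section BlowupCounting

variable {α γ β : Type*} [Fintype α] [Fintype γ] [Fintype β]
  [DecidableEq α] [DecidableEq γ] [DecidableEq β] {F : Finset (Finset α)} {H : Finset (Finset β)}

open Classical in
/-- A vertex of `A` outside the base layer is a clone of a base vertex, and by Cauchy–Schwarz
adding a clone at most squares the density. -/
theorem pow_mul_le_card_isBlowupHomOn (i₀ : γ) {t : ℝ} (ht₀ : 0 ≤ t) (ht₁ : t ≤ 1)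
    (hF : t * (Fintype.card β : ℝ) ^ Fintype.card α ≤ #{ψ | IsHypergraphHom F H ψ})
    (A : Finset (α × γ)) :
    t ^ 2 ^ #A * (Fintype.card β : ℝ) ^ Fintype.card (α × γ) ≤
      #{g | IsBlowupHomOn F H ({p | p.2 = i₀} ∪ ↑A) g} := by
  induction A using Finset.induction_on with
  | empty =>
    have hlayer : Injective fun v : α => (v, i₀) := fun _ _ h => (Prod.mk.inj h).1
    have hcard : Fintype.card α ≤ Fintype.card (α × γ) := by
      rw [Fintype.card_prod]
      exact Nat.le_mul_of_pos_right _ (Fintype.card_pos_iff.2 ⟨i₀⟩)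
    calc t ^ 2 ^ #(∅ : Finset (α × γ)) * (Fintype.card β : ℝ) ^ Fintype.card (α × γ)
        = t * (Fintype.card β : ℝ) ^ Fintype.card α *
            (Fintype.card β : ℝ) ^ (Fintype.card (α × γ) - Fintype.card α) := by
          rw [card_empty, pow_zero, pow_one, mul_assoc, ← pow_add, Nat.add_sub_cancel' hcard]
      _ ≤ (#{g : α × γ → β | IsHypergraphHom F H (g ∘ fun v => (v, i₀))} : ℝ) := by
          rw [card_filter_comp_eq hlayer (IsHypergraphHom F H), Nat.cast_mul, Nat.cast_pow]
          gcongr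
      _ ≤ #{g | IsBlowupHomOn F H ({p | p.2 = i₀} ∪ ↑(∅ : Finset (α × γ))) g} := by
          rw [coe_empty, Set.union_empty]
          have hsub (g : α × γ → β) (hg : IsHypergraphHom F H (g ∘ fun v => (v, i₀))) :
              IsBlowupHomOn F H {p | p.2 = i₀} g :=
            hg.isBlowupHomOn_layer
          exact_mod_cast card_le_card (monotone_filter_right _ fun g _ => hsub g)
  | insert a A ha ih =>
    rw [coe_insert, Set.union_insert, card_insert_of_notMem ha, pow_succ, pow_mul]
    set D : Set (α × γ) := {p | p.2 = i₀} ∪ ↑A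
    by_cases haD : a ∈ D
    · rw [Set.insert_eq_of_mem haD]
      refine le_trans ?_ ih
      gcongr
      exact pow_le_of_le_one (by positivity) (pow_le_one₀ ht₀ ht₁) two_ne_zero
    · obtain ⟨v, j⟩ := a
      have hvi : (v, i₀) ∈ D := Or.inl rfl
      have hcs := sq_card_filter_le_card_filter_update (IsBlowupHomOn F H D)
        (ne_of_mem_of_not_mem hvi haD) fun g y hg => hg.update_of_notMem haD y
      have hclone : #{g | IsBlowupHomOn F H D g ∧
            IsBlowupHomOn F H D (update g (v, i₀) (g (v, j)))} ≤
          #{g | IsBlowupHomOn F H (insert (v, j) D) g} :=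
        card_le_card (monotone_filter_right _ fun g _ hg => hg.1.insert hvi hg.2)
      refine sq_mul_le_of_mul_le_of_sq_le_mul (by positivity) (by positivity) (by positivity)
        ih ?_
      exact_mod_cast hcs.trans (Nat.mul_le_mul_left _ hclone)

theorem pow_mul_le_card_isHypergraphHom [Nonempty γ] {F' : Finset (Finset γ)} {φ : γ → α}
    (hφ : IsHypergraphHom F' F φ) (hφinj : ∀ e ∈ F', Set.InjOn φ e) {t : ℝ} (ht₀ : 0 ≤ t)
    (ht₁ : t ≤ 1)
    (hF : t * (Fintype.card β : ℝ) ^ Fintype.card α ≤ #{ψ | IsHypergraphHom F H ψ}) :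
    t ^ 2 ^ Fintype.card (α × γ) * (Fintype.card β : ℝ) ^ Fintype.card γ ≤
      #{ψ | IsHypergraphHom F' H ψ} := by
  classical
  obtain ⟨i₀⟩ := ‹Nonempty γ›
  have hblowup := pow_mul_le_card_isBlowupHomOn i₀ ht₀ ht₁ hF univ
  rw [coe_univ, Set.union_univ, card_univ] at hblowup
  have hdiag : Injective fun v : γ => (φ v, v) := fun _ _ h => (Prod.mk.inj h).2
  have hpull (g : α × γ → β) (hg : IsBlowupHomOn F H Set.univ g) :
      IsHypergraphHom F' H (g ∘ fun v => (φ v, v)) :=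
    hg.isHypergraphHom_comp hφ hφinj
  have hcount : #{g : α × γ → β | IsBlowupHomOn F H Set.univ g} ≤
      #{ψ | IsHypergraphHom F' H ψ} * Fintype.card β ^ (Fintype.card (α × γ) - Fintype.card γ) := by
    rw [← card_filter_comp_eq hdiag (IsHypergraphHom F' H)]
    exact card_le_card (monotone_filter_right _ fun g _ => hpull g)
  have hcard :
      Fintype.card (α × γ) = Fintype.card γ + (Fintype.card (α × γ) - Fintype.card γ) := by
    rw [Nat.add_sub_cancel' (Fintype.card_prod α γ ▸ Nat.le_mul_of_pos_left _
      (Fintype.card_pos_iff.2 ⟨φ i₀⟩))]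
  rcases (Fintype.card β).eq_zero_or_pos with hβ | hβ
  · simp [hβ]
  · refine le_of_mul_le_mul_right ?_
      (pow_pos (Nat.cast_pos.2 hβ) (Fintype.card (α × γ) - Fintype.card γ))
    rw [mul_assoc, ← pow_add, ← hcard]
    exact_mod_cast hblowup.trans (by exact_mod_cast hcount)

end BlowupCounting

theorem ThreeUniform.injOn_of_isHypergraphHom {α γ : Type*} [DecidableEq α]
    {F : Finset (Finset α)} {F' : Finset (Finset γ)} {φ : γ → α} (hF : ThreeUniform F)
    (hF' : ThreeUniform F') (hφ : IsHypergraphHom F' F φ) : ∀ e ∈ F', Set.InjOn φ e :=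
  fun e he => card_image_iff.1 (by rw [hF _ (hφ e he), hF' e he])

section Copies

variable {k m : ℕ} (F : Finset (Finset (Fin k))) (H : Finset (Finset (Fin m)))

theorem copyCount_le_card_isHypergraphHom : copyCount F H ≤ #{ψ | IsHypergraphHom F H ψ} :=
  card_le_card (monotone_filter_right _ fun _ _ hψ => hψ.2)

theorem card_isHypergraphHom_le_copyCount_add :
    #{ψ | IsHypergraphHom F H ψ} ≤ copyCount F H + k ^ 2 * m ^ (k - 1) := by
  have hsub : ({ψ | IsHypergraphHom F H ψ} : Finset (Fin k → Fin m)) ⊆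
      ({ψ | Injective ψ ∧ IsHypergraphHom F H ψ} : Finset _) ∪
        ({ψ | ¬Injective ψ} : Finset _) := by
    intro ψ hψ
    by_cases hinj : Injective ψ <;> simp_all
  calc #{ψ | IsHypergraphHom F H ψ}
      ≤ #{ψ : Fin k → Fin m | Injective ψ ∧ IsHypergraphHom F H ψ} +
          #{ψ : Fin k → Fin m | ¬Injective ψ} :=
        (card_le_card hsub).trans (card_union_le _ _)
    _ ≤ copyCount F H + k ^ 2 * m ^ (k - 1) := by
        gcongr
        · exact card_le_card (monotone_filter_right _ fun _ _ h => h)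
        · simpa using card_filter_not_injective_le (κ := Fin k) (β := Fin m)

end Copies

theorem statement_8 :
    ∀ ξ : ℝ, 0 < ξ → ∀ k ℓ : ℕ, 0 < k → 0 < ℓ →
      ∃ ζ : ℝ, 0 < ζ ∧ ∃ n₀ : ℕ,
        ∀ (F : Finset (Finset (Fin k))) (F' : Finset (Finset (Fin ℓ))),
          ThreeUniform F → ThreeUniform F' →
          (∃ φ : Fin ℓ → Fin k, ∀ e ∈ F', e.image φ ∈ F) →
          ∀ n : ℕ, n₀ ≤ n → ∀ H : Finset (Finset (Fin n)), ThreeUniform H →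
            ξ * (n : ℝ) ^ k ≤ (copyCount F H : ℝ) →
            ζ * (n : ℝ) ^ ℓ ≤ (copyCount F' H : ℝ) := by
  intro ξ hξ k ℓ _ hℓ
  set t := min ξ 1
  have ht₀ : 0 < t := lt_min hξ one_pos
  set ζ := t ^ 2 ^ (k * ℓ)
  have hζ : 0 < ζ := by positivity
  refine ⟨ζ / 2, by positivity, ⌈2 * ℓ ^ 2 / ζ⌉₊, ?_⟩
  rintro F F' hF hF' ⟨φ, hφ⟩ n hn H - hcopies
  have := Fin.pos_iff_nonempty.1 hℓ
  have hhomF : t * (n : ℝ) ^ k ≤ #{ψ | IsHypergraphHom F H ψ} := by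
    refine le_trans ?_ (hcopies.trans (by exact_mod_cast copyCount_le_card_isHypergraphHom F H))
    gcongr
    exact min_le_left _ _
  have hhomF' := pow_mul_le_card_isHypergraphHom (H := H) hφ
    (hF.injOn_of_isHypergraphHom hF' hφ) ht₀.le (min_le_right _ _) (by simpa using hhomF)
  simp only [Fintype.card_prod, Fintype.card_fin] at hhomF'
  have hcopies' :
      (#{ψ | IsHypergraphHom F' H ψ} : ℝ) ≤ copyCount F' H + ℓ ^ 2 * n ^ (ℓ - 1) := by
    exact_mod_cast card_isHypergraphHom_le_copyCount_add F' H
  have hnlarge : (ℓ : ℝ) ^ 2 ≤ ζ / 2 * n := by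
    have := (Nat.le_ceil (2 * ℓ ^ 2 / ζ)).trans (Nat.cast_le.2 hn)
    rw [div_le_iff₀ hζ] at this
    linarith
  have hsmall : (ℓ : ℝ) ^ 2 * n ^ (ℓ - 1) ≤ ζ / 2 * n ^ ℓ := by
    calc (ℓ : ℝ) ^ 2 * n ^ (ℓ - 1) ≤ ζ / 2 * n * n ^ (ℓ - 1) := by gcongr
      _ = ζ / 2 * n ^ ℓ := by rw [mul_assoc, ← pow_succ', Nat.sub_add_cancel hℓ]
  linarith
end

section
/- For all ξ, ε ∈ (0,1] there exist η, ρ > 0 such that the following holds for all sufficiently large m. Suppose V₁, V₂, V₃ are pairwise disjoint sets of size m, G = (V₁ ⊔ V₂, P) is an (η,ξ)-regular bipartite graph, and H is a 3-partite 3-uniform hypergraph on V₁ ⊔ V₂ ⊔ V₃ that is (ρ, 1/4+ε, ev)-dense over (V₃, P) (viewing P as a set of ordered pairs in V₁×V₂). Then |∂H[V₁,V₃]| + |∂H[V₂,V₃]| ≥ (1+ε)·m². -/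
open Finset

variable {n : ℕ}

/-!
For `z ∈ V₃` let `a_z`, `b_z` be the numbers of shadow neighbours of `z` in `V₁` and `V₂`. Every
pair of `P` forming an edge with `z` lies in the product of these two neighbourhoods, so by
regularity `z` sees at most `ξ a_z b_z + η m²` pairs of `P`. When `a_z + b_z < (1 + 11ε/10) m`,
the bound `a_z b_z ≤ (a_z + b_z)² / 4` puts this well below `(1/4 + ε) ξ m²`, so the density of
`H` over `(V₃, P)` leaves room for at most `εm/25` such vertices; summing `a_z + b_z` over the
remaining ones gives `(1 + ε) m²`.
-/

open Classical in
noncomputable def shadowNbhd (E : Finset (Finset (Fin n))) (A : Finset (Fin n)) (z : Fin n) :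
    Finset (Fin n) :=
  A.filter (fun a => ∃ e ∈ E, a ∈ e ∧ z ∈ e)

lemma eXP_eq_sum_card_Nres (E : Finset (Finset (Fin n))) (X : Finset (Fin n))
    (P : Finset (Fin n × Fin n)) : eXP E X P = ∑ x ∈ X, (Nres E x P).card := by
  simp only [eXP, Nres, card_filter, sum_product]

lemma card_shadowPairs_eq_sum (E : Finset (Finset (Fin n))) (A B : Finset (Fin n)) :
    (shadowPairs E A B).card = ∑ z ∈ B, (shadowNbhd E A z).card := by
  simp only [shadowPairs, shadowNbhd, card_filter, sum_product]
  exact sum_comm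

lemma Nres_subset_filter_shadowNbhd {E : Finset (Finset (Fin n))} {V₁ V₂ : Finset (Fin n)}
    {P : Finset (Fin n × Fin n)} (hP : P ⊆ V₁ ×ˢ V₂) (z : Fin n) :
    Nres E z P ⊆ P.filter (fun p => p.1 ∈ shadowNbhd E V₁ z ∧ p.2 ∈ shadowNbhd E V₂ z) := by
  intro p hp
  obtain ⟨hpP, hedge⟩ := mem_filter.mp hp
  obtain ⟨h₁, h₂⟩ := mem_product.mp (hP hpP)
  simp only [mem_filter, shadowNbhd]
  exact ⟨hpP, ⟨h₁, _, hedge, by simp, by simp⟩, ⟨h₂, _, hedge, by simp, by simp⟩⟩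

namespace RegBip

variable {P : Finset (Fin n × Fin n)} {V₁ V₂ : Finset (Fin n)} {η ξ : ℝ}

lemma card_filter_le (h : RegBip P V₁ V₂ η ξ) {X Y : Finset (Fin n)} (hX : X ⊆ V₁)
    (hY : Y ⊆ V₂) :
    ((P.filter (fun p => p.1 ∈ X ∧ p.2 ∈ Y)).card : ℝ)
      ≤ ξ * X.card * Y.card + η * V₁.card * V₂.card := by
  linarith [(abs_le.mp (h X hX Y hY)).2]

lemma abs_card_sub_le (h : RegBip P V₁ V₂ η ξ) (hP : P ⊆ V₁ ×ˢ V₂) :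
    |(P.card : ℝ) - ξ * V₁.card * V₂.card| ≤ η * V₁.card * V₂.card := by
  have hfull : P.filter (fun p => p.1 ∈ V₁ ∧ p.2 ∈ V₂) = P :=
    filter_true_of_mem fun p hp => mem_product.mp (hP hp)
  simpa [hfull] using h V₁ subset_rfl V₂ subset_rfl

lemma card_Nres_le (h : RegBip P V₁ V₂ η ξ) (hP : P ⊆ V₁ ×ˢ V₂)
    (E : Finset (Finset (Fin n))) (z : Fin n) :
    ((Nres E z P).card : ℝ)
      ≤ ξ * (shadowNbhd E V₁ z).card * (shadowNbhd E V₂ z).card + η * V₁.card * V₂.card :=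
  (Nat.cast_le.mpr (card_le_card (Nres_subset_filter_shadowNbhd hP z))).trans
    (h.card_filter_le (filter_subset _ _) (filter_subset _ _))

end RegBip

lemma EvDenseOver.sub_mul_card_le {E : Finset (Finset (Fin n))} {ρ d c : ℝ}
    {X Z : Finset (Fin n)} {P : Finset (Fin n × Fin n)} (h : EvDenseOver E ρ d X P)
    (hZ : Z ⊆ X) (hc : ∀ z ∈ Z, ((Nres E z P).card : ℝ) ≤ c) :
    (d * P.card - c) * Z.card ≤ ρ * X.card * P.card := by
  have hlow := h Z hZ P subset_rfl
  have hup : (eXP E Z P : ℝ) ≤ Z.card * c := by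
    rw [eXP_eq_sum_card_Nres]
    push_cast
    simpa using sum_le_card_nsmul Z _ c hc
  linarith

lemma sub_mul_le_sum_of_card_filter_lt_le {ι : Type*} (s : Finset ι) (f : ι → ℝ) {t k : ℝ}
    (hf : ∀ i ∈ s, 0 ≤ f i) (ht : 0 ≤ t) (hk : ((s.filter (fun i => f i < t)).card : ℝ) ≤ k) :
    (s.card - k) * t ≤ ∑ i ∈ s, f i := by
  classical
  have hsplit := card_filter_add_card_filter_not (s := s) (fun i => f i < t)
  calc (s.card - k) * t ≤ (s.filter (fun i => ¬ f i < t)).card * t := by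
        gcongr
        have : (s.card : ℝ) = (s.filter (fun i => f i < t)).card
            + (s.filter (fun i => ¬ f i < t)).card := by exact_mod_cast hsplit.symm
        linarith
    _ ≤ ∑ i ∈ s.filter (fun i => ¬ f i < t), f i := by
        simpa using card_nsmul_le_sum _ f t fun i hi => not_lt.mp (mem_filter.mp hi).2
    _ ≤ ∑ i ∈ s, f i := sum_le_sum_of_subset_of_nonneg (filter_subset _ _)
        fun i hi _ => hf i hi

lemma card_lowShadow_le {ξ ε : ℝ} (hξ : 0 < ξ) (hε : 0 < ε) (hε₁ : ε ≤ 1) {m : ℕ}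
    {V₁ V₂ V₃ : Finset (Fin n)} (hV₁ : V₁.card = m) (hV₂ : V₂.card = m) (hV₃ : V₃.card = m)
    {P : Finset (Fin n × Fin n)} (hP : P ⊆ V₁ ×ˢ V₂) (hreg : RegBip P V₁ V₂ (ξ * ε / 60) ξ)
    {E : Finset (Finset (Fin n))} (hdense : EvDenseOver E (ε ^ 2 / 1000) (1 / 4 + ε) V₃ P) :
    ((V₃.filter (fun z => ((shadowNbhd E V₁ z).card + (shadowNbhd E V₂ z).card : ℝ)
        < (1 + 11 * ε / 10) * m)).card : ℝ) ≤ ε * m / 25 := by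
  set Z := V₃.filter (fun z => ((shadowNbhd E V₁ z).card + (shadowNbhd E V₂ z).card : ℝ)
    < (1 + 11 * ε / 10) * m)
  have hZ : Z ⊆ V₃ := filter_subset _ _
  have hZm : (Z.card : ℝ) ≤ m := by exact_mod_cast hV₃ ▸ card_le_card hZ
  rcases (Nat.cast_nonneg m : (0 : ℝ) ≤ m).eq_or_lt with hm | hm
  · rw [← hm] at hZm ⊢
    linarith
  -- regularity and `4ab ≤ (a + b)²` bound the link of a low-shadow vertex inside `P`
  have hc : ∀ z ∈ Z, ((Nres E z P).card : ℝ)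
      ≤ ξ * ((1 + 11 * ε / 10) * m) ^ 2 / 4 + ξ * ε / 60 * m * m := by
    intro z hz
    have hlt := (mem_filter.mp hz).2
    set a := ((shadowNbhd E V₁ z).card : ℝ)
    set b := ((shadowNbhd E V₂ z).card : ℝ)
    have hab : a * b ≤ ((1 + 11 * ε / 10) * m) ^ 2 / 4 := by
      have : (a + b) ^ 2 ≤ ((1 + 11 * ε / 10) * m) ^ 2 := by gcongr
      nlinarith [sq_nonneg (a - b)]
    have := hreg.card_Nres_le hP E z
    rw [hV₁, hV₂] at this
    nlinarith
  have key := hdense.sub_mul_card_le hZ hc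
  have hPcard := abs_le.mp (hreg.abs_card_sub_le hP)
  rw [hV₁, hV₂] at hPcard
  rw [hV₃] at key
  have hgap : ξ * ε / 16 * m ^ 2 ≤ (1 / 4 + ε) * P.card
      - (ξ * ((1 + 11 * ε / 10) * m) ^ 2 / 4 + ξ * ε / 60 * m * m) := by
    have : (1 / 4 + ε) * ((ξ - ξ * ε / 60) * m * m) ≤ (1 / 4 + ε) * P.card := by
      gcongr; linarith
    nlinarith [mul_pos (mul_pos hξ hε) (pow_pos hm 2)]
  have hPup : (P.card : ℝ) ≤ 2 * ξ * m ^ 2 := by nlinarith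
  have : ξ * ε / 16 * m ^ 2 * Z.card ≤ ξ * ε / 16 * m ^ 2 * (ε * m / 25) := by
    calc ξ * ε / 16 * m ^ 2 * Z.card
        ≤ ((1 / 4 + ε) * P.card
            - (ξ * ((1 + 11 * ε / 10) * m) ^ 2 / 4 + ξ * ε / 60 * m * m)) * Z.card := by
          gcongr
      _ ≤ ε ^ 2 / 1000 * m * P.card := key
      _ ≤ ε ^ 2 / 1000 * m * (2 * ξ * m ^ 2) := by gcongr
      _ ≤ ξ * ε / 16 * m ^ 2 * (ε * m / 25) := by
          nlinarith [mul_pos (mul_pos hξ (pow_pos hε 2)) (pow_pos hm 3)]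
  exact le_of_mul_le_mul_left this (by positivity)

theorem statement_9 :
    ∀ ξ ε : ℝ, 0 < ξ → ξ ≤ 1 → 0 < ε → ε ≤ 1 →
      ∃ η ρ : ℝ, 0 < η ∧ 0 < ρ ∧ ∃ m₀ : ℕ, ∀ m : ℕ, m₀ ≤ m →
        ∀ (N : ℕ) (V₁ V₂ V₃ : Finset (Fin N)),
          Disjoint V₁ V₂ → Disjoint V₁ V₃ → Disjoint V₂ V₃ →
          V₁.card = m → V₂.card = m → V₃.card = m →
          ∀ P : Finset (Fin N × Fin N), P ⊆ V₁ ×ˢ V₂ →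
            RegBip P V₁ V₂ η ξ →
            ∀ E : Finset (Finset (Fin N)),
              (∀ e ∈ E, ∃ a ∈ V₁, ∃ b ∈ V₂, ∃ c ∈ V₃, e = {a, b, c}) →
              EvDenseOver E ρ (1 / 4 + ε) V₃ P →
              (1 + ε) * (m : ℝ) ^ 2 ≤
                ((shadowPairs E V₁ V₃).card : ℝ) + ((shadowPairs E V₂ V₃).card : ℝ) := by
  intro ξ ε hξ _ hε hε₁
  refine ⟨ξ * ε / 60, ε ^ 2 / 1000, by positivity, by positivity, 0, ?_⟩
  intro m _ N V₁ V₂ V₃ _ _ _ hV₁ hV₂ hV₃ P hP hreg E _ hdense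
  have hsum := sub_mul_le_sum_of_card_filter_lt_le V₃
    (fun z => ((shadowNbhd E V₁ z).card + (shadowNbhd E V₂ z).card : ℝ))
    (fun _ _ => by positivity) (by positivity)
    (card_lowShadow_le hξ hε hε₁ hV₁ hV₂ hV₃ hP hreg hdense)
  rw [hV₃, sum_add_distrib, ← Nat.cast_sum, ← Nat.cast_sum, ← card_shadowPairs_eq_sum,
    ← card_shadowPairs_eq_sum] at hsum
  refine le_trans ?_ hsum
  nlinarith [mul_nonneg (mul_nonneg hε.le (sub_nonneg.mpr hε₁)) (sq_nonneg (m : ℝ)),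
    mul_nonneg hε.le (sq_nonneg (m : ℝ))]
end

section
/- For every d, β > 0 there exist ρ, α > 0 and n₀ such that for every (ρ, d, ee)-dense 3-uniform hypergraph H on n ≥ n₀ vertices the following holds: for every ℓ ∈ {5,6,7} and for every pair of disjoint ordered β-connectable pairs (x,y), (w,z) ∈ V×V, the number of tight (x,y)-(z,w)-paths with ℓ inner vertices is at least α·n^ℓ. -/
open Finset

variable {n : ℕ}

/-!
Call a pair `(b, c)` rich for a pair set `A` if there are `Ω(n)` vertices `a` with `(a, b) ∈ A`
and `abc ∈ E`. Ee-density applied to `A` and to all pairs through a fixed middle vertex shows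
that for all but a few middle vertices `m` there are `Ω(n)` rich pairs `(a, m)`; hence the rich
pairs of a dense pair set are dense, and they even meet every dense pair set `B` in `Ω(n³)`
overlapping pairs `((a, m), (m, c))`.

Start from the dense set of pairs `(v₁, v₂)` that continue `(x, y)` (it is dense since `(x, y)`
is connectable) and pass to rich pairs repeatedly. At the end, ee-density between the last rich
pairs and the dense set of pairs preceding `(z, w)` yields `Ω(n³)` tight walks
`v_{ℓ-2} v_{ℓ-1} v_ℓ z w`, and each walk extends backwards through the chain of rich pairs with
`Ω(n)` choices per step, giving `Ω(n^ℓ)` tight walks `x y v₁ … v_ℓ z w`. Only `O(n^(ℓ-1))` of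
them repeat a vertex or meet `{x, y, z, w}`.
-/

section FunctionCounting

variable {α : Type*} [Fintype α] {m : ℕ}

lemma card_le_pow_of_eqOn_succAbove (i : Fin (m + 1)) (s : Finset (Fin (m + 1) → α))
    (h : ∀ t ∈ s, ∀ t' ∈ s, (∀ j, t (i.succAbove j) = t' (i.succAbove j)) → t i = t' i) :
    #s ≤ Fintype.card α ^ m := by
  refine (card_le_card_of_injOn (t := univ) (fun t j => t (i.succAbove j))
    (fun _ _ => mem_coe.2 (mem_univ _)) fun t ht t' ht' heq => funext fun k => ?_).trans
    (by simp)
  rcases Fin.eq_self_or_eq_succAbove i k with rfl | ⟨j, rfl⟩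
  · exact h t ht t' ht' (congrFun heq)
  · exact congrFun heq j

lemma card_filter_not_injective_le_s15 [DecidableEq α] :
    #(univ.filter (fun t : Fin (m + 1) → α => ¬ Function.Injective t))
      ≤ (m + 1) ^ 2 * Fintype.card α ^ m := by
  have hsub : univ.filter (fun t : Fin (m + 1) → α => ¬ Function.Injective t)
      ⊆ (univ : Finset (Fin (m + 1))).offDiag.biUnion
          (fun p => univ.filter (fun t : Fin (m + 1) → α => t p.1 = t p.2)) := by
    intro t ht
    obtain ⟨i, j, hij, hne⟩ := Function.not_injective_iff.1 (mem_filter.1 ht).2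
    exact mem_biUnion.2 ⟨(i, j), by simp [hne], by simp [hij]⟩
  refine (card_le_card hsub).trans
    ((card_biUnion_le_card_mul _ _ (Fintype.card α ^ m) fun p hp => ?_).trans ?_)
  · obtain ⟨-, -, hne⟩ := mem_offDiag.1 hp
    refine card_le_pow_of_eqOn_succAbove p.1 _ fun t ht t' ht' heq => ?_
    obtain ⟨j, hj⟩ := Fin.exists_succAbove_eq hne.symm
    rw [(mem_filter.1 ht).2, (mem_filter.1 ht').2, ← hj, heq]
  · rw [offDiag_card, card_univ, Fintype.card_fin, sq]
    exact Nat.mul_le_mul_right _ (Nat.sub_le _ _)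

lemma card_filter_exists_apply_mem_le [DecidableEq α] (S : Finset α) :
    #(univ.filter (fun t : Fin (m + 1) → α => ∃ i, t i ∈ S))
      ≤ (m + 1) * #S * Fintype.card α ^ m := by
  have hsub : univ.filter (fun t : Fin (m + 1) → α => ∃ i, t i ∈ S)
      ⊆ (univ ×ˢ S).biUnion (fun p => univ.filter (fun t : Fin (m + 1) → α => t p.1 = p.2)) := by
    intro t ht
    obtain ⟨i, hi⟩ := (mem_filter.1 ht).2
    exact mem_biUnion.2 ⟨(i, t i), by simp [hi], by simp⟩
  refine (card_le_card hsub).trans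
    ((card_biUnion_le_card_mul _ _ (Fintype.card α ^ m) fun p _ => ?_).trans ?_)
  · refine card_le_pow_of_eqOn_succAbove p.1 _ fun t ht t' ht' _ => ?_
    rw [(mem_filter.1 ht).2, (mem_filter.1 ht').2]
  · simp

end FunctionCounting

lemma le_card_filter_mul_add {ι : Type*} (s : Finset ι) (f : ι → ℝ) {M θ S : ℝ}
    (hθ : 0 ≤ θ) (hM : ∀ i ∈ s, f i ≤ M) (hS : S ≤ ∑ i ∈ s, f i) :
    S ≤ #(s.filter (θ ≤ f ·)) * M + #s * θ := by
  rw [← sum_filter_add_sum_filter_not s (θ ≤ f ·)] at hS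
  have hlarge := sum_le_card_nsmul (s.filter (θ ≤ f ·)) f M
    fun i hi => hM i (mem_filter.1 hi).1
  have hsmall := sum_le_card_nsmul (s.filter (¬ θ ≤ f ·)) f θ
    fun i hi => (not_le.1 (mem_filter.1 hi).2).le
  have hcard : (#(s.filter (¬ θ ≤ f ·)) : ℝ) ≤ #s := by
    exact_mod_cast card_le_card (filter_subset _ _)
  rw [nsmul_eq_mul] at hlarge hsmall
  nlinarith

section Connecting

variable {E : Finset (Finset (Fin n))} {ρ d : ℝ}

def TightWalk (E : Finset (Finset (Fin n))) (l : List (Fin n)) : Prop :=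
  ∀ (i : ℕ) (h : i + 2 < l.length),
    ({l[i]'(by omega), l[i+1]'(by omega), l[i+2]'h} : Finset (Fin n)) ∈ E

open Classical in
noncomputable def backExt (E : Finset (Finset (Fin n))) (A : Finset (Fin n × Fin n))
    (b c : Fin n) : Finset (Fin n) :=
  univ.filter (fun a => (a, b) ∈ A ∧ ({a, b, c} : Finset (Fin n)) ∈ E)

open Classical in
noncomputable def richPairs (E : Finset (Finset (Fin n))) (A : Finset (Fin n × Fin n))
    (θ : ℝ) : Finset (Fin n × Fin n) :=
  univ.filter (fun p => θ ≤ #(backExt E A p.1 p.2))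

open Classical in
noncomputable def walkCount (E : Finset (Finset (Fin n))) (A : Finset (Fin n × Fin n))
    (s : List (Fin n)) (k : ℕ) : ℕ :=
  #(univ.filter (fun t : Fin (k + 2) → Fin n =>
    (t 0, t 1) ∈ A ∧ TightWalk E (List.ofFn t ++ s)))

open Classical in
noncomputable def connPairs (E : Finset (Finset (Fin n))) (β : ℝ) (x y : Fin n) :
    Finset (Fin n × Fin n) :=
  (connSet E β x y ×ˢ univ).filter (fun p => ({y, p.1, p.2} : Finset (Fin n)) ∈ E)

lemma tightPath_iff {l : List (Fin n)} : TightPath E l ↔ l.Nodup ∧ TightWalk E l := Iff.rfl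

lemma tightWalk_of_length_le (l : List (Fin n)) (hl : l.length ≤ 2) : TightWalk E l :=
  fun i h => absurd h (by omega)

lemma tightWalk_cons_cons_cons {a b c : Fin n} {l : List (Fin n)} :
    TightWalk E (a :: b :: c :: l) ↔
      ({a, b, c} : Finset (Fin n)) ∈ E ∧ TightWalk E (b :: c :: l) := by
  refine ⟨fun h => ⟨h 0 (by simp), fun i hi => h (i + 1) (by simp at hi ⊢; omega)⟩, ?_⟩
  rintro ⟨habc, h⟩ (_ | i) hi
  · exact habc
  · exact h i (by simp at hi ⊢; omega)

lemma ofFn_append_eq_cons_cons {k : ℕ} (t : Fin (k + 2) → Fin n) (s : List (Fin n)) :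
    List.ofFn t ++ s = t 0 :: t 1 :: (List.ofFn (fun i : Fin k => t i.succ.succ) ++ s) := by
  simp [List.ofFn_succ]

lemma tightWalk_cons_ofFn_append {k : ℕ} {a : Fin n} {t : Fin (k + 2) → Fin n}
    {s : List (Fin n)} :
    TightWalk E (a :: (List.ofFn t ++ s)) ↔
      ({a, t 0, t 1} : Finset (Fin n)) ∈ E ∧ TightWalk E (List.ofFn t ++ s) := by
  rw [ofFn_append_eq_cons_cons]
  exact tightWalk_cons_cons_cons

lemma EeDense.mono {ρ' : ℝ} (h : EeDense E ρ d) (hρ : ρ ≤ ρ') : EeDense E ρ' d := fun P Q => by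
  nlinarith [h P Q, mul_le_mul_of_nonneg_right hρ (by positivity : (0 : ℝ) ≤ n ^ 3)]

lemma Connectable.ne (hE : ThreeUniform E) {β : ℝ} (hβ : 0 < β) {x y : Fin n}
    (h : Connectable E β x y) : x ≠ y := by
  rintro rfl
  have hempty : connSet E β x x = ∅ := filter_eq_empty_iff.2 fun v _ hv => by
    have h3 := hE _ hv.1
    have h2 : #({x, v} : Finset (Fin n)) ≤ 2 := card_le_two
    rw [insert_idem] at h3
    omega
  have hn : (0 : ℝ) < n := by exact_mod_cast x.pos
  rw [Connectable, hempty, card_empty, Nat.cast_zero] at h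
  nlinarith

lemma ePQ_eq_sum_card_backExt (P Q : Finset (Fin n × Fin n)) :
    ePQ E P Q = ∑ q ∈ Q, #(backExt E P q.1 q.2) := by
  rw [ePQ, card_filter, sum_product_right]
  refine sum_congr rfl fun q _ => ?_
  rw [← card_filter]
  refine card_bij (fun p _ => p.1) ?_ ?_ ?_
  · rintro ⟨a, b⟩ hp
    simp only [mem_filter] at hp
    obtain ⟨hpP, rfl, hedge⟩ := hp
    simp [backExt, hpP, hedge]
  · rintro ⟨a, b⟩ hp ⟨a', b'⟩ hp' rfl
    simp only [mem_filter] at hp hp'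
    rw [hp.2.1, hp'.2.1]
  · intro a ha
    simp only [backExt, mem_filter, mem_univ, true_and] at ha
    exact ⟨(a, q.1), by simp [ha.1, ha.2], rfl⟩

lemma card_Kmid_eq_sum (P Q : Finset (Fin n × Fin n)) :
    #(Kmid P Q) = ∑ m, #(P.filter (·.2 = m)) * #(Q.filter (·.1 = m)) := by
  rw [card_eq_sum_card_fiberwise (f := fun pq => pq.1.2) (t := univ) (fun _ _ => mem_univ _)]
  refine sum_congr rfl fun m _ => ?_
  rw [← card_product]
  congr 1
  ext ⟨p, q⟩
  simp only [Kmid, mem_filter, mem_product]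
  constructor
  · rintro ⟨⟨⟨hp, hq⟩, hpq⟩, rfl⟩
    exact ⟨⟨hp, rfl⟩, hq, hpq.symm⟩
  · rintro ⟨⟨hp, rfl⟩, hq, hqm⟩
    exact ⟨⟨⟨hp, hq⟩, hqm.symm⟩, rfl⟩

lemma card_Kmid_univ_product (P : Finset (Fin n × Fin n)) (M : Finset (Fin n)) :
    #(Kmid P (univ ×ˢ M)) = #P * #M := by
  have hfiber (m : Fin n) : #((univ ×ˢ M).filter (·.1 = m)) = #M := by
    rw [← one_mul #M, ← card_singleton m, ← card_product]
    congr 1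
    ext ⟨a, b⟩
    simp [and_comm, eq_comm]
  simp only [card_Kmid_eq_sum, hfiber, ← sum_mul]
  rw [← card_eq_sum_card_fiberwise (fun _ _ => mem_univ _)]

noncomputable def middleWeight (E : Finset (Finset (Fin n))) (A : Finset (Fin n × Fin n))
    (m : Fin n) : ℕ :=
  ∑ v, #(backExt E A v m)

lemma ePQ_univ_product_eq_sum (A : Finset (Fin n × Fin n)) (M : Finset (Fin n)) :
    ePQ E A (univ ×ˢ M) = ∑ m ∈ M, middleWeight E A m := by
  rw [ePQ_eq_sum_card_backExt, sum_product_right]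
  rfl

lemma card_lightMiddles_le (hEe : EeDense E ρ d) (A : Finset (Fin n × Fin n)) (t : ℝ) :
    (d * #A - t) * #(univ.filter (fun m => (middleWeight E A m : ℝ) < t)) ≤ ρ * n ^ 3 := by
  set L := univ.filter (fun m => (middleWeight E A m : ℝ) < t)
  have hdense := hEe A (univ ×ˢ L)
  rw [card_Kmid_univ_product, ePQ_univ_product_eq_sum] at hdense
  have hlight := sum_le_card_nsmul L (fun m => (middleWeight E A m : ℝ)) t
    fun m hm => (mem_filter.1 hm).2.le
  push_cast at hdense
  rw [nsmul_eq_mul] at hlight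
  nlinarith

lemma le_card_richPairs_fiber (A : Finset (Fin n × Fin n)) {θ : ℝ} (hθ : 0 ≤ θ) (m : Fin n)
    (hm : 2 * θ * n ≤ middleWeight E A m) :
    θ ≤ #((richPairs E A θ).filter (·.2 = m)) := by
  have hn : (0 : ℝ) < n := by exact_mod_cast m.pos
  have hthreshold := le_card_filter_mul_add univ (fun v => (#(backExt E A v m) : ℝ)) hθ
    (M := n) (fun v _ => by simpa using card_le_univ (backExt E A v m))
    (by simpa [middleWeight] using hm)
  have hinj : #(univ.filter (fun v => θ ≤ (#(backExt E A v m) : ℝ)))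
      ≤ #((richPairs E A θ).filter (·.2 = m)) :=
    card_le_card_of_injOn (fun v => (v, m)) (fun v hv => by simpa [richPairs] using hv)
      fun v _ v' _ h => (Prod.ext_iff.1 h).1
  have hinjR : (#(univ.filter (fun v => θ ≤ (#(backExt E A v m) : ℝ))) : ℝ)
      ≤ #((richPairs E A θ).filter (·.2 = m)) := by exact_mod_cast hinj
  simp only [card_univ, Fintype.card_fin] at hthreshold
  nlinarith

lemma card_filter_fst_eq_le (B : Finset (Fin n × Fin n)) (m : Fin n) :
    #(B.filter (·.1 = m)) ≤ n := by
  refine (card_le_card_of_injOn (t := univ) Prod.snd (fun _ _ => mem_coe.2 (mem_univ _))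
    fun q hq q' hq' h => Prod.ext ?_ h).trans (by simp)
  rw [mem_coe, mem_filter] at hq hq'
  rw [hq.2, hq'.2]

lemma card_Kmid_richPairs_ge (hEe : EeDense E ρ d) (hd : 0 < d) {a b : ℝ} (ha : 0 < a)
    {A B : Finset (Fin n × Fin n)} (hA : a * n ^ 2 ≤ #A) (hB : b * n ^ 2 ≤ #B)
    (hρ : ρ ≤ d * a * b / 4) :
    d * a * b / 8 * n ^ 3 ≤ #(Kmid (richPairs E A (d * a / 4 * n)) B) := by
  rcases Nat.eq_zero_or_pos n with rfl | hn0
  · simp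
  have hn : (0 : ℝ) < n := by exact_mod_cast hn0
  set θ := d * a / 4 * n with hθ
  set R := richPairs E A θ
  set L := univ.filter (fun m => (middleWeight E A m : ℝ) < 2 * θ * n)
  have hL : #L * n ≤ b / 2 * n ^ 2 := by
    have hlight : (d * #A - 2 * θ * n) * #L ≤ ρ * n ^ 3 := card_lightMiddles_le hEe A _
    have hdA : d * a / 2 * n ^ 2 ≤ d * #A - 2 * θ * n := by
      rw [hθ]
      nlinarith [mul_le_mul_of_nonneg_left hA hd.le]
    have : d * a / 2 * n ^ 2 * #L ≤ d * a * b / 4 * n ^ 3 := by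
      nlinarith [mul_le_mul_of_nonneg_right hρ (pow_nonneg hn.le 3),
        mul_le_mul_of_nonneg_right hdA (Nat.cast_nonneg #L)]
    have hpos : 0 < d * a / 2 * n := by positivity
    nlinarith
  have hheavy : ∀ m ∉ L, θ ≤ #(R.filter (·.2 = m)) := fun m hm =>
    le_card_richPairs_fiber A (by positivity) m (by simpa [L] using hm)
  have hBheavy : b / 2 * n ^ 2 ≤ ∑ m ∈ univ.filter (· ∉ L), (#(B.filter (·.1 = m)) : ℝ) := by
    have hsplit := sum_filter_add_sum_filter_not univ (· ∈ L)
      fun m => (#(B.filter (·.1 = m)) : ℝ)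
    have hfibers : ∑ m, (#(B.filter (·.1 = m)) : ℝ) = #B := by
      exact_mod_cast (card_eq_sum_card_fiberwise fun _ _ => mem_univ _).symm
    have hlight : ∑ m ∈ univ.filter (· ∈ L), (#(B.filter (·.1 = m)) : ℝ) ≤ #L * n := by
      rw [filter_mem_eq_inter, univ_inter, ← nsmul_eq_mul]
      exact sum_le_card_nsmul _ _ _ fun m _ => by exact_mod_cast card_filter_fst_eq_le B m
    linarith
  calc d * a * b / 8 * n ^ 3 = θ * (b / 2 * n ^ 2) := by ring
    _ ≤ ∑ m ∈ univ.filter (· ∉ L), θ * #(B.filter (·.1 = m)) := by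
      rw [← mul_sum]; gcongr
    _ ≤ ∑ m ∈ univ.filter (· ∉ L), (#(R.filter (·.2 = m)) : ℝ) * #(B.filter (·.1 = m)) := by
      gcongr with m hm
      exact hheavy m (mem_filter.1 hm).2
    _ ≤ ∑ m, (#(R.filter (·.2 = m)) : ℝ) * #(B.filter (·.1 = m)) :=
      sum_le_sum_of_subset_of_nonneg (filter_subset _ _) fun _ _ _ => by positivity
    _ = #(Kmid R B) := by rw [card_Kmid_eq_sum]; push_cast; rfl

lemma card_richPairs_ge (hEe : EeDense E ρ d) (hd : 0 < d) {a : ℝ} (ha : 0 < a)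
    {A : Finset (Fin n × Fin n)} (hA : a * n ^ 2 ≤ #A) (hρ : ρ ≤ d * a / 4) :
    d * a / 8 * n ^ 2 ≤ #(richPairs E A (d * a / 4 * n)) := by
  rcases Nat.eq_zero_or_pos n with rfl | hn0
  · simp
  have hn : (0 : ℝ) < n := by exact_mod_cast hn0
  have hKmid := card_Kmid_richPairs_ge hEe hd ha hA (B := univ) (b := 1)
    (by simp [card_univ, sq]) (by linarith)
  rw [← univ_product_univ, card_Kmid_univ_product] at hKmid
  push_cast at hKmid
  simp only [card_univ, Fintype.card_fin] at hKmid
  nlinarith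

lemma card_connPairs_ge {β : ℝ} (hβ : 0 ≤ β) {x y : Fin n} (hxy : Connectable E β x y) :
    β ^ 2 * n ^ 2 ≤ #(connPairs E β x y) := by
  have hcard : #(connPairs E β x y) = ∑ v ∈ connSet E β x y, codeg E y v := by
    rw [connPairs, card_filter, sum_product]
    exact sum_congr rfl fun v _ => by rw [codeg, card_filter]
  have hcodeg := card_nsmul_le_sum (connSet E β x y) (fun v => (codeg E y v : ℝ)) (β * n)
    fun v hv => (mem_filter.1 hv).2.2
  rw [hcard]
  push_cast
  rw [nsmul_eq_mul] at hcodeg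
  nlinarith [mul_le_mul_of_nonneg_right hxy (by positivity : (0 : ℝ) ≤ β * n)]

lemma ePQ_le_walkCount_one {z w : Fin n} (A B : Finset (Fin n × Fin n))
    (hB : ∀ q ∈ B, ({q.1, q.2, z} : Finset (Fin n)) ∈ E ∧ ({q.2, z, w} : Finset (Fin n)) ∈ E) :
    ePQ E A B ≤ walkCount E A [z, w] 1 := by
  refine card_le_card_of_injOn (fun pq => ![pq.1.1, pq.1.2, pq.2.2]) ?_ ?_
  · rintro ⟨⟨p₁, p₂⟩, ⟨q₁, q₂⟩⟩ hpq
    simp only [coe_filter, Set.mem_ofPred_eq, mem_product] at hpq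
    obtain ⟨⟨hp, hq⟩, rfl, hedge⟩ := hpq
    simp only [coe_filter, Set.mem_ofPred_eq, mem_univ, true_and]
    refine ⟨hp, ?_⟩
    simp only [List.ofFn_succ, Fin.isValue, Matrix.cons_val_zero, Matrix.cons_val_succ,
      List.ofFn_zero, List.cons_append, List.nil_append, tightWalk_cons_cons_cons]
    exact ⟨hedge, (hB _ hq).1, (hB _ hq).2, tightWalk_of_length_le _ (by simp)⟩
  · rintro ⟨⟨p₁, p₂⟩, ⟨q₁, q₂⟩⟩ hpq ⟨⟨p₁', p₂'⟩, ⟨q₁', q₂'⟩⟩ hpq' h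
    simp only [coe_filter, Set.mem_ofPred_eq] at hpq hpq'
    obtain ⟨-, rfl, -⟩ := hpq
    obtain ⟨-, rfl, -⟩ := hpq'
    have h₀ := congrFun h 0
    have h₁ := congrFun h 1
    have h₂ := congrFun h 2
    simp_all

lemma walkCount_succ_ge (A : Finset (Fin n × Fin n)) (θ : ℝ) (s : List (Fin n)) (k : ℕ) :
    θ * walkCount E (richPairs E A θ) s k ≤ walkCount E A s (k + 1) := by
  classical
  set T := univ.filter (fun t : Fin (k + 2) → Fin n =>
    (t 0, t 1) ∈ richPairs E A θ ∧ TightWalk E (List.ofFn t ++ s))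
  have hsigma : θ * #T ≤ #(T.sigma fun t => backExt E A (t 0) (t 1)) := by
    rw [card_sigma, mul_comm, ← nsmul_eq_mul]
    push_cast
    exact card_nsmul_le_sum _ _ _ fun t ht => by
      simpa [richPairs] using (mem_filter.1 ht).2.1
  suffices hcons : #(T.sigma fun t => backExt E A (t 0) (t 1)) ≤ walkCount E A s (k + 1) by
    exact hsigma.trans (by exact_mod_cast hcons)
  refine card_le_card_of_injOn (fun ta => (Fin.cons ta.2 ta.1 : Fin (k + 3) → Fin n)) ?_ ?_
  · rintro ⟨t, a⟩ hat
    simp only [T, coe_sigma, Set.mem_sigma_iff, coe_filter, Set.mem_ofPred_eq, mem_univ,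
      true_and, backExt] at hat
    obtain ⟨⟨-, hwalk⟩, hA, hedge⟩ := hat
    simp only [coe_filter, Set.mem_ofPred_eq, mem_univ, true_and, Fin.cons_zero,
      Fin.cons_one, List.ofFn_cons, List.cons_append, tightWalk_cons_ofFn_append]
    exact ⟨hA, hedge, hwalk⟩
  · rintro ⟨t, a⟩ - ⟨t', a'⟩ - h
    obtain ⟨rfl, rfl⟩ := Fin.cons_inj.1 h
    rfl

lemma walkCount_one_richPairs_ge (hEe : EeDense E ρ d) (hd : 0 < d) {β : ℝ} (hβ : 0 ≤ β)
    {w z : Fin n} (hwz : Connectable E β w z) {a : ℝ} (ha : 0 < a)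
    {A : Finset (Fin n × Fin n)} (hA : a * n ^ 2 ≤ #A)
    (hρ : ρ ≤ d * a * β ^ 2 / 4) (hρ' : ρ ≤ d ^ 2 * a * β ^ 2 / 16) :
    d ^ 2 * a * β ^ 2 / 16 * n ^ 3 ≤ walkCount E (richPairs E A (d * a / 4 * n)) [z, w] 1 := by
  set B := (connPairs E β w z).image Prod.swap
  have hB : β ^ 2 * n ^ 2 ≤ #B := by
    rw [card_image_of_injective _ Prod.swap_injective]
    exact card_connPairs_ge hβ hwz
  have hBends : ∀ q ∈ B,
      ({q.1, q.2, z} : Finset (Fin n)) ∈ E ∧ ({q.2, z, w} : Finset (Fin n)) ∈ E := by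
    simp only [B, connPairs, connSet, mem_image, mem_filter, mem_product, mem_univ, true_and,
      and_true]
    rintro _ ⟨⟨b, c⟩, ⟨⟨hwzb, -⟩, hzbc⟩, rfl⟩
    constructor
    · convert hzbc using 1; ext; simp; tauto
    · convert hwzb using 1; ext; simp; tauto
  have hKmid := card_Kmid_richPairs_ge hEe hd ha hA hB hρ
  have hdense := hEe (richPairs E A (d * a / 4 * n)) B
  have hwalks : (ePQ E (richPairs E A (d * a / 4 * n)) B : ℝ)
      ≤ walkCount E (richPairs E A (d * a / 4 * n)) [z, w] 1 := by
    exact_mod_cast ePQ_le_walkCount_one _ _ hBends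
  nlinarith [mul_le_mul_of_nonneg_left hKmid hd.le,
    mul_le_mul_of_nonneg_right hρ' (by positivity : (0 : ℝ) ≤ n ^ 3)]

lemma exists_walkCount_ge (hd : 0 < d) {β : ℝ} (hβ : 0 < β) (k : ℕ) {a : ℝ} (ha : 0 < a) :
    ∃ ρ > 0, ∃ c : ℝ, 0 < c ∧ ∀ (n : ℕ) (E : Finset (Finset (Fin n))) (w z : Fin n)
      (A : Finset (Fin n × Fin n)), EeDense E ρ d → Connectable E β w z → a * n ^ 2 ≤ #A →
      c * (n : ℝ) ^ (k + 4) ≤ walkCount E A [z, w] (k + 2) := by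
  induction k generalizing a with
  | zero =>
    refine ⟨min (d * a * β ^ 2 / 4) (d ^ 2 * a * β ^ 2 / 16), by positivity,
      d * a / 4 * (d ^ 2 * a * β ^ 2 / 16), by positivity, ?_⟩
    intro n E w z A hEe hwz hA
    have hjunction := walkCount_one_richPairs_ge hEe hd hβ.le hwz ha hA
      (min_le_left _ _) (min_le_right _ _)
    calc d * a / 4 * (d ^ 2 * a * β ^ 2 / 16) * n ^ (0 + 4)
        = d * a / 4 * n * (d ^ 2 * a * β ^ 2 / 16 * n ^ 3) := by ring
      _ ≤ d * a / 4 * n * walkCount E (richPairs E A (d * a / 4 * n)) [z, w] 1 := by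
        gcongr
      _ ≤ _ := by exact_mod_cast walkCount_succ_ge A _ [z, w] 1
  | succ k ih =>
    obtain ⟨ρ, hρ, c, hc, hwalks⟩ := ih (a := d * a / 8) (by positivity)
    refine ⟨min ρ (d * a / 4), by positivity, d * a / 4 * c, by positivity, ?_⟩
    intro n E w z A hEe hwz hA
    have hrich := card_richPairs_ge hEe hd ha hA (min_le_right _ _)
    calc d * a / 4 * c * n ^ (k + 1 + 4) = d * a / 4 * n * (c * n ^ (k + 4)) := by ring
      _ ≤ d * a / 4 * n * walkCount E (richPairs E A (d * a / 4 * n)) [z, w] (k + 2) := by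
        gcongr
        exact hwalks n E w z _ (hEe.mono (min_le_left _ _)) hwz hrich
      _ ≤ _ := by exact_mod_cast walkCount_succ_ge A _ [z, w] (k + 2)

lemma walkCount_connPairs_le {β : ℝ} {x y z w : Fin n} (hxy : x ≠ y) (hzw : z ≠ w)
    (hxz : x ≠ z) (hxw : x ≠ w) (hyz : y ≠ z) (hyw : y ≠ w) (k : ℕ) :
    walkCount E (connPairs E β x y) [z, w] k
      ≤ connCount E x y z w (k + 2) + ((k + 2) ^ 2 + (k + 2) * 4) * n ^ (k + 1) := by
  classical
  set S : Finset (Fin n) := {x, y, z, w}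
  have hsub : univ.filter (fun t : Fin (k + 2) → Fin n =>
        (t 0, t 1) ∈ connPairs E β x y ∧ TightWalk E (List.ofFn t ++ [z, w]))
      ⊆ univ.filter (fun t => TightPath E ([x, y] ++ List.ofFn t ++ [z, w]))
        ∪ (univ.filter (fun t => ¬ Function.Injective t)
          ∪ univ.filter (fun t => ∃ i, t i ∈ S)) := by
    intro t ht
    simp only [mem_filter, mem_univ, true_and, mem_union] at ht ⊢
    by_cases hinj : Function.Injective t
    · by_cases hS : ∃ i, t i ∈ S
      · exact .inr (.inr hS)
      refine .inl (tightPath_iff.2 ⟨?_, ?_⟩)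
      · simp only [S, mem_insert, mem_singleton, not_exists, not_or] at hS
        simp only [List.nodup_append, List.nodup_ofFn, List.mem_append, List.mem_ofFn,
          List.mem_cons, List.not_mem_nil, List.nodup_cons]
        grind
      · obtain ⟨hconn, hedge⟩ := mem_filter.1 ht.1
        rw [ofFn_append_eq_cons_cons] at ht
        rw [List.append_assoc, List.cons_append, List.cons_append, List.nil_append,
          ofFn_append_eq_cons_cons, tightWalk_cons_cons_cons, tightWalk_cons_cons_cons]
        exact ⟨(mem_filter.1 (mem_product.1 hconn).1).2.1, hedge, ht.2⟩
    · exact .inr (.inl hinj)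
  have hnoninj := card_filter_not_injective_le_s15 (α := Fin n) (m := k + 1)
  have hhits := card_filter_exists_apply_mem_le (α := Fin n) (m := k + 1) S
  have hS : #S ≤ 4 := card_le_four
  simp only [Fintype.card_fin] at hnoninj hhits
  calc walkCount E (connPairs E β x y) [z, w] k
      ≤ #(univ.filter (fun t : Fin (k + 2) → Fin n =>
          TightPath E ([x, y] ++ List.ofFn t ++ [z, w])))
        + (#(univ.filter (fun t : Fin (k + 2) → Fin n => ¬ Function.Injective t))
          + #(univ.filter (fun t : Fin (k + 2) → Fin n => ∃ i, t i ∈ S))) :=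
        (card_le_card hsub).trans
          ((card_union_le _ _).trans (add_le_add le_rfl (card_union_le _ _)))
    _ ≤ connCount E x y z w (k + 2)
        + ((k + 2) ^ 2 * n ^ (k + 1) + (k + 2) * 4 * n ^ (k + 1)) :=
        add_le_add le_rfl (add_le_add hnoninj (hhits.trans (by gcongr)))
    _ = _ := by ring

theorem exists_connCount_ge {d β : ℝ} (hd : 0 < d) (hβ : 0 < β) (k : ℕ) :
    ∃ ρ > 0, ∃ α : ℝ, 0 < α ∧ ∃ n₀ : ℕ, ∀ n : ℕ, n₀ ≤ n →
      ∀ E : Finset (Finset (Fin n)), ThreeUniform E → EeDense E ρ d →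
        ∀ x y w z : Fin n, x ≠ w → x ≠ z → y ≠ w → y ≠ z →
          Connectable E β x y → Connectable E β w z →
            α * (n : ℝ) ^ (k + 4) ≤ connCount E x y z w (k + 4) := by
  obtain ⟨ρ, hρ, c, hc, hwalks⟩ := exists_walkCount_ge hd hβ k (a := β ^ 2) (by positivity)
  set C : ℕ := (k + 4) ^ 2 + (k + 4) * 4
  refine ⟨ρ, hρ, c / 2, by positivity, ⌈2 * C / c⌉₊, fun n hn E hE hEe x y w z hxw hxz hyw hyz
    hxy hwz => ?_⟩
  have hC : (C : ℝ) ≤ c / 2 * n := by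
    have := (Nat.le_ceil _).trans (Nat.cast_le.2 hn)
    rw [div_le_iff₀ hc] at this
    linarith
  have hW := hwalks n E w z _ hEe hwz (card_connPairs_ge hβ.le hxy)
  have hle : (walkCount E (connPairs E β x y) [z, w] (k + 2) : ℝ)
      ≤ connCount E x y z w (k + 4) + C * (n : ℝ) ^ (k + 3) := by
    exact_mod_cast walkCount_connPairs_le (hxy.ne hE hβ) (hwz.ne hE hβ).symm hxz hxw hyz hyw (k + 2)
  have hCn := mul_le_mul_of_nonneg_right hC (by positivity : (0 : ℝ) ≤ n ^ (k + 3))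
  calc c / 2 * (n : ℝ) ^ (k + 4) = c * n ^ (k + 4) - c / 2 * n * n ^ (k + 3) := by ring
    _ ≤ _ := by linarith

end Connecting

theorem statement_15 :
    ∀ d β : ℝ, 0 < d → 0 < β →
      ∃ ρ α : ℝ, 0 < ρ ∧ 0 < α ∧ ∃ n₀ : ℕ, ∀ n : ℕ, n₀ ≤ n →
        ∀ E : Finset (Finset (Fin n)), ThreeUniform E → EeDense E ρ d →
          ∀ ℓ : ℕ, (ℓ = 5 ∨ ℓ = 6 ∨ ℓ = 7) →
            ∀ x y w z : Fin n,
              x ≠ w → x ≠ z → y ≠ w → y ≠ z →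
              Connectable E β x y → Connectable E β w z →
              α * (n : ℝ) ^ ℓ ≤ (connCount E x y z w ℓ : ℝ) := by
  intro d β hd hβ
  obtain ⟨ρ₁, hρ₁, α₁, hα₁, N₁, h₁⟩ := exists_connCount_ge hd hβ 1
  obtain ⟨ρ₂, hρ₂, α₂, hα₂, N₂, h₂⟩ := exists_connCount_ge hd hβ 2
  obtain ⟨ρ₃, hρ₃, α₃, hα₃, N₃, h₃⟩ := exists_connCount_ge hd hβ 3
  refine ⟨min ρ₁ (min ρ₂ ρ₃), min α₁ (min α₂ α₃), by positivity, by positivity,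
    max N₁ (max N₂ N₃), fun n hn E hE hEe ℓ hℓ x y w z hxw hxz hyw hyz hxy hwz => ?_⟩
  rcases hℓ with rfl | rfl | rfl
  · refine le_trans ?_ (h₁ n (le_of_max_le_left hn) E hE (hEe.mono (min_le_left _ _))
      x y w z hxw hxz hyw hyz hxy hwz)
    gcongr
    exact min_le_left _ _
  · refine le_trans ?_ (h₂ n (le_of_max_le_left (le_of_max_le_right hn)) E hE
      (hEe.mono ((min_le_right _ _).trans (min_le_left _ _))) x y w z hxw hxz hyw hyz hxy hwz)
    gcongr
    exact (min_le_right _ _).trans (min_le_left _ _)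
  · refine le_trans ?_ (h₃ n (le_of_max_le_right (le_of_max_le_right hn)) E hE
      (hEe.mono ((min_le_right _ _).trans (min_le_right _ _))) x y w z hxw hxz hyw hyz hxy hwz)
    gcongr
    exact (min_le_right _ _).trans (min_le_right _ _)
end

section
/- For every α, d > 0 there exist ρ > 0 and n₀ such that every (ρ,d)-dense graph G on n ≥ n₀ vertices with minimum degree at least α·n contains a Hamilton cycle. -/
open Finset

variable {n : ℕ}

/-!
A longest cycle `C` is Hamiltonian. Otherwise pick `u ∉ C`: for every neighbour `z` of `u` on
`C` the successor `z⁺` is not adjacent to `u`, and the successors of two such neighbours are not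
adjacent to each other, since either edge would give a longer cycle. So `u` together with these
successors is an independent set, and `(ρ, d)`-density with `ρ = dβ²` bounds independent sets by
`βn`; hence every vertex off `C` has fewer than `βn` neighbours on `C`. On the other hand `C` has
more than `αn` vertices (a longest path closes to a cycle through all neighbours of its endpoint),
and the neighbours of `u` off `C` give `|V ∖ C| ≥ (α - β)n`. Density between `V ∖ C` and `C` then
forces `e(V ∖ C, C) ≥ d|V ∖ C||C| - dβ²n²`, which is too many edges once `β` is small.
-/
theorem List.exists_append_cons_of_exists_mem {α : Type*} {p : α → Prop} :
    ∀ {l : List α}, (∃ x ∈ l, p x) → ∃ l₁ w l₂, l = l₁ ++ w :: l₂ ∧ p w ∧ ∀ y ∈ l₂, ¬p y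
  | [], ⟨_, hx, _⟩ => absurd hx not_mem_nil
  | a :: l, h => by
    by_cases hl : ∃ x ∈ l, p x
    · obtain ⟨l₁, w, l₂, rfl, hw, hl₂⟩ := exists_append_cons_of_exists_mem hl
      exact ⟨a :: l₁, w, l₂, rfl, hw, hl₂⟩
    · simp only [not_exists, not_and] at hl
      obtain ⟨x, hx, hpx⟩ := h
      rcases mem_cons.mp hx with rfl | hx
      · exact ⟨[], x, l, rfl, hpx, hl⟩
      · exact absurd hpx (hl x hx)

theorem List.exists_isRotated_cons_of_mem {α : Type*} {a : α} {l : List α} (h : a ∈ l) :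
    ∃ l', l ~r a :: l' := by
  obtain ⟨s, t, rfl⟩ := mem_iff_append.mp h
  exact ⟨t ++ s, isRotated_append⟩

theorem List.formPerm_append_cons_cons_apply {α : Type*} [DecidableEq α] {l₁ l₂ : List α}
    {x y : α} (h : (l₁ ++ x :: y :: l₂).Nodup) : formPerm (l₁ ++ x :: y :: l₂) x = y := by
  rw [formPerm_eq_of_isRotated h isRotated_append]
  exact formPerm_apply_head _ _ _ (isRotated_append.nodup_iff.mp h)

theorem List.exists_max_length_of_forall_nodup {α : Type*} [Fintype α] {P : List α → Prop}
    (hP : ∀ l, P l → l.Nodup) (h : ∃ l, P l) :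
    ∃ l, P l ∧ ∀ l', P l' → l'.length ≤ l.length :=
  Set.exists_max_image {l | P l} length
    ((Set.finite_range (Subtype.val : {l : List α // l.Nodup} → List α)).subset
      fun l hl => ⟨⟨l, hP l hl⟩, rfl⟩) h

open List SimpleGraph

section Cycles

variable {V : Type*} {G : SimpleGraph V}

/-- Cycles are kept as vertex lists rather than closed walks: the rotations and segment reversals
below are list operations. -/
structure IsCycleList (G : SimpleGraph V) (c : List V) : Prop where
  three_le_length : 3 ≤ c.length
  nodup : c.Nodup
  chain : Cycle.Chain G.Adj (c : Cycle V)

structure IsLongestCycleList (G : SimpleGraph V) (c : List V) : Prop extends IsCycleList G c where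
  length_le : ∀ c', IsCycleList G c' → c'.length ≤ c.length

namespace IsCycleList

variable {c c' : List V}

theorem of_isRotated (hc : IsCycleList G c) (h : c ~r c') : IsCycleList G c' where
  three_le_length := h.perm.length_eq ▸ hc.three_le_length
  nodup := h.nodup_iff.mp hc.nodup
  chain := Cycle.coe_eq_coe.mpr h ▸ hc.chain

theorem insert_after_head {a b u : V} {l : List V} (hc : IsCycleList G (a :: b :: l))
    (hu : u ∉ a :: b :: l) (ha : G.Adj a u) (hb : G.Adj u b) :
    IsCycleList G (a :: u :: b :: l) := by
  obtain ⟨hlen, hnd, hch⟩ := hc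
  refine ⟨by simp only [length_cons] at hlen ⊢; omega, ?_, ?_⟩
  · simp only [nodup_cons, List.mem_cons, not_or] at hnd hu ⊢
    tauto
  · simp only [Cycle.chain_coe_cons, cons_append, isChain_cons_cons] at hch ⊢
    exact ⟨ha, hb, hch.2⟩

theorem reverse_segment {w x y s u : V} {m r : List V}
    (hc : IsCycleList G (w :: x :: (m ++ y :: s :: r))) (hu : u ∉ w :: x :: (m ++ y :: s :: r))
    (hw : G.Adj u w) (hy : G.Adj u y) (hxs : G.Adj x s) :
    IsCycleList G (u :: y :: (m.reverse ++ x :: s :: (r ++ [w]))) := by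
  classical
  obtain ⟨hlen, hnd, hch⟩ := hc
  have hperm : (y :: (m.reverse ++ x :: s :: (r ++ [w]))).Perm (w :: x :: (m ++ y :: s :: r)) := by
    rw [perm_iff_count]
    intro a
    simp only [count_cons, count_append, count_reverse, count_nil]
    omega
  refine ⟨by simp only [length_cons, length_append, length_reverse] at hlen ⊢; omega,
    nodup_cons.mpr ⟨fun h => hu (hperm.mem_iff.mp h), hperm.nodup_iff.mpr hnd⟩, ?_⟩
  rw [Cycle.chain_coe_cons, show w :: (x :: (m ++ y :: s :: r) ++ [w]) =
    (w :: x :: m) ++ y :: s :: (r ++ [w]) by simp, isChain_append_cons_cons] at hch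
  obtain ⟨hxy, -, hsw⟩ := hch
  have hyx : IsChain G.Adj (y :: m.reverse ++ [x]) := by
    simpa using isChain_reverse.mpr ((isChain_cons.mp hxy).2.imp fun _ _ h => h.symm)
  have hsu : IsChain G.Adj (s :: (r ++ [w, u])) := by
    rw [show s :: (r ++ [w, u]) = (s :: r) ++ w :: u :: [] by simp, isChain_append_cons_cons]
    exact ⟨by simpa using hsw, hw.symm, .singleton u⟩
  rw [Cycle.chain_coe_cons, show u :: (y :: (m.reverse ++ x :: s :: (r ++ [w])) ++ [u]) =
    (u :: y :: m.reverse) ++ x :: s :: (r ++ [w, u]) by simp, isChain_append_cons_cons]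
  exact ⟨isChain_cons_cons.mpr ⟨hy, hyx⟩, hxs, hsu⟩

theorem isHamiltonian [DecidableEq V] [Fintype V] (hc : IsCycleList G c) (hall : ∀ v, v ∈ c) :
    G.IsHamiltonian := by
  obtain ⟨hlen, hnd, hch⟩ := hc
  have hcard : c.length = Fintype.card V := by
    rw [← toFinset_card_of_nodup hnd, Finset.eq_univ_of_forall (s := c.toFinset) (by simpa),
      Finset.card_univ]
  obtain ⟨a, b, t, rfl⟩ : ∃ a b t, c = a :: b :: t := by
    match c, hlen with
    | a :: b :: t, _ => exact ⟨a, b, t, rfl⟩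
  rw [Cycle.chain_coe_cons, cons_append, isChain_cons_cons] at hch
  let p : G.Walk b a := (Walk.ofSupport _ (cons_ne_nil b _) hch.2).copy rfl (by simp)
  have hp : p.support = b :: (t ++ [a]) :=
    (Walk.support_copy _ _ _).trans (Walk.support_ofSupport _ _)
  have hperm : (b :: (t ++ [a])).Perm (a :: b :: t) := by
    simpa using perm_append_singleton a (b :: t)
  have hplen : p.length = t.length + 1 := by
    simpa [Walk.length_support] using congrArg length hp
  simp only [length_cons] at hlen hcard
  refine fun _ => ⟨a, .cons hch.1 p, ?_⟩
  rw [Walk.isHamiltonianCycle_iff_isCycle_and_length_eq,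
    Walk.isCycle_iff_isPath_tail_and_le_length]
  refine ⟨⟨?_, ?_⟩, ?_⟩
  · simpa using Walk.IsPath.mk' (hp ▸ hperm.nodup_iff.mpr hnd)
  · simp only [Walk.length_cons]; omega
  · simp only [Walk.length_cons]; omega

end IsCycleList

theorem exists_isLongestCycleList [Fintype V] {c : List V} (hc : IsCycleList G c) :
    ∃ c, IsLongestCycleList G c := by
  obtain ⟨c, hc, hmax⟩ := exists_max_length_of_forall_nodup (fun _ h => h.nodup) ⟨c, hc⟩
  exact ⟨c, hc, hmax⟩

/-- In a longest path `a :: t`, all neighbours of `a` lie on `t`; closing the path at the last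
of them gives a cycle through all of them. -/
theorem exists_isCycleList_degree_lt [Fintype V] [DecidableRel G.Adj] [Nonempty V]
    (h : ∀ v, 2 ≤ G.degree v) : ∃ v c, IsCycleList G c ∧ G.degree v < c.length := by
  classical
  obtain ⟨p, ⟨hpne, hpnd, hpch⟩, hmax⟩ :=
    exists_max_length_of_forall_nodup (P := fun p => p ≠ [] ∧ p.Nodup ∧ p.IsChain G.Adj)
      (fun _ h => h.2.1) ⟨[Classical.arbitrary V], by simp⟩
  obtain ⟨a, t, rfl⟩ := exists_cons_of_ne_nil hpne
  have hnbr : ∀ w, G.Adj a w → w ∈ t := by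
    intro w hw
    by_contra hwt
    have hwa : w ∉ a :: t := by simpa [hw.ne.symm] using hwt
    have := hmax (w :: a :: t) ⟨cons_ne_nil _ _, nodup_cons.mpr ⟨hwa, hpnd⟩,
      isChain_cons_cons.mpr ⟨hw.symm, hpch⟩⟩
    simp at this
  obtain ⟨w, hw⟩ := (G.degree_pos_iff_exists_adj a).mp (by have := h a; omega)
  obtain ⟨t₁, w, t₂, rfl, haw, ht₂⟩ := exists_append_cons_of_exists_mem ⟨w, hnbr w hw, hw⟩
  have hdeg : G.degree a ≤ t₁.length + 1 := by
    rw [← G.card_neighborFinset_eq_degree]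
    refine (Finset.card_le_card fun y hy => ?_).trans ((t₁ ++ [w]).toFinset_card_le.trans (by simp))
    rw [mem_neighborFinset] at hy
    have := hnbr y hy
    simp only [mem_append, List.mem_cons] at this
    simp only [mem_toFinset, mem_append, List.mem_singleton]
    rcases this with h | rfl | h
    exacts [.inl h, .inr rfl, absurd hy (ht₂ y h)]
  have := h a
  refine ⟨a, a :: (t₁ ++ [w]), ⟨by simp; omega, ?_, ?_⟩, by simp; omega⟩
  · exact hpnd.sublist (((nil_sublist t₂).cons_cons w).append_left t₁ |>.cons_cons a)
  · rw [Cycle.chain_coe_cons, show a :: (t₁ ++ [w] ++ [a]) = (a :: t₁) ++ w :: a :: [] by simp,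
      isChain_append_cons_cons]
    exact ⟨hpch.infix ⟨[], t₂, by simp⟩, haw.symm, .singleton a⟩

namespace IsLongestCycleList

variable {c : List V} {u z z' : V}

theorem of_isRotated {c' : List V} (hc : IsLongestCycleList G c) (h : c ~r c') :
    IsLongestCycleList G c' :=
  ⟨hc.toIsCycleList.of_isRotated h, fun c'' hc'' => h.perm.length_eq ▸ hc.length_le c'' hc''⟩

variable [DecidableEq V]

-- `c.formPerm` sends each vertex of `c` to its successor on the cycle.

theorem not_adj_formPerm (hc : IsLongestCycleList G c) (hu : u ∉ c) (hz : z ∈ c)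
    (huz : G.Adj u z) : ¬G.Adj u (c.formPerm z) := by
  intro huz'
  obtain ⟨l, hrot⟩ := exists_isRotated_cons_of_mem hz
  have hc' := hc.toIsCycleList.of_isRotated hrot
  obtain ⟨x, l, rfl⟩ := exists_cons_of_ne_nil (l := l) fun h => by
    simpa [h] using hc'.three_le_length
  rw [formPerm_eq_of_isRotated hc.nodup hrot, formPerm_apply_head _ _ _ hc'.nodup] at huz'
  have := hc.length_le _ (hc'.insert_after_head (fun h => hu (hrot.mem_iff.mpr h)) huz.symm huz')
  simp [hrot.perm.length_eq] at this

/-- Otherwise `u, z', …, z⁺, z'⁺, …, z, u` would be a longer cycle. -/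
theorem not_adj_formPerm_formPerm (hc : IsLongestCycleList G c) (hu : u ∉ c) (hz : z ∈ c)
    (hz' : z' ∈ c) (hne : z ≠ z') (huz : G.Adj u z) (huz' : G.Adj u z') :
    ¬G.Adj (c.formPerm z) (c.formPerm z') := by
  intro hadj
  obtain ⟨l, hrot⟩ := exists_isRotated_cons_of_mem hz
  have hc' := hc.of_isRotated hrot
  have hu' : u ∉ z :: l := fun h => hu (hrot.mem_iff.mpr h)
  rw [formPerm_eq_of_isRotated hc.nodup hrot] at hadj
  obtain ⟨x, l, rfl⟩ := exists_cons_of_ne_nil (l := l) fun h => by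
    simpa [h] using hc'.three_le_length
  rw [formPerm_apply_head _ _ _ hc'.nodup] at hadj
  have hz'l : z' = x ∨ z' ∈ l := by simpa [Ne.symm hne] using hrot.mem_iff.mp hz'
  rcases hz'l with rfl | hz'l
  · exact hc'.not_adj_formPerm hu' (by simp) huz
      (by rwa [formPerm_apply_head _ _ _ hc'.nodup])
  obtain ⟨m, r, rfl⟩ := mem_iff_append.mp hz'l
  cases r with
  | nil =>
    refine hc'.not_adj_formPerm hu' (by simp) huz' ?_
    rwa [show z :: x :: (m ++ [z']) = z :: ((x :: m) ++ [z']) from rfl,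
      formPerm_cons_concat_apply_last]
  | cons s r =>
    rw [show z :: x :: (m ++ z' :: s :: r) = (z :: x :: m) ++ z' :: s :: r from rfl,
      formPerm_append_cons_cons_apply hc'.nodup] at hadj
    have := hc'.length_le _ (hc'.reverse_segment hu' huz huz' hadj)
    simp at this

theorem isIndepSet_insert_image_formPerm [DecidableRel G.Adj] (hc : IsLongestCycleList G c)
    (hu : u ∉ c) :
    G.IsIndepSet ↑(insert u ({z ∈ c.toFinset | G.Adj u z}.image c.formPerm)) := by
  rw [isIndepSet_iff, Finset.coe_insert, Finset.coe_image, Set.pairwise_insert]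
  constructor
  · refine (c.formPerm.injective.injOn.pairwise_image).mpr fun z hz z' hz' hne => ?_
    simp only [Finset.coe_filter, mem_toFinset, Set.mem_ofPred_eq] at hz hz'
    exact hc.not_adj_formPerm_formPerm hu hz.1 hz'.1 hne hz.2 hz'.2
  · rintro _ ⟨z, hz, rfl⟩ -
    simp only [Finset.coe_filter, mem_toFinset, Set.mem_ofPred_eq] at hz
    have := hc.not_adj_formPerm hu hz.1 hz.2
    exact ⟨this, fun h => this h.symm⟩

end IsLongestCycleList

end Cycles

section Dense

variable {G : SimpleGraph (Fin n)} {ρ d α β : ℝ}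

theorem GraphDense.mul_card_sq_le_of_isIndepSet (hG : GraphDense G ρ d) {T : Finset (Fin n)}
    (hT : G.IsIndepSet (T : Set (Fin n))) : d * (#T : ℝ) ^ 2 ≤ ρ * n ^ 2 := by
  classical
  have hempty : (T ×ˢ T).filter (fun p => G.Adj p.1 p.2) = ∅ :=
    filter_eq_empty_iff.mpr fun p hp hadj =>
      hT (mem_product.mp hp).1 (mem_product.mp hp).2 hadj.ne hadj
  have := hG T T
  rw [hempty] at this
  simp only [card_empty, CharP.cast_eq_zero] at this
  linarith

theorem GraphDense.sub_le_card_mul_of_card_adj_le [DecidableRel G.Adj] (hG : GraphDense G ρ d)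
    {X Y : Finset (Fin n)} {m : ℝ} (hm : ∀ x ∈ X, (#{y ∈ Y | G.Adj x y} : ℝ) ≤ m) :
    d * #X * #Y - ρ * n ^ 2 ≤ #X * m := by
  classical
  calc d * #X * #Y - ρ * n ^ 2
      ≤ #((X ×ˢ Y).filter (fun p => G.Adj p.1 p.2)) := by convert hG X Y
    _ = ∑ x ∈ X, (#{y ∈ Y | G.Adj x y} : ℝ) := by
      simp only [card_filter, sum_product, Nat.cast_sum]
    _ ≤ ∑ _x ∈ X, m := sum_le_sum hm
    _ = #X * m := by rw [sum_const, nsmul_eq_mul]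

theorem IsLongestCycleList.card_adj_add_one_le [DecidableRel G.Adj]
    (hG : GraphDense G (d * β ^ 2) d) (hd : 0 < d) (hβ : 0 ≤ β) {c : List (Fin n)} {u : Fin n}
    (hc : IsLongestCycleList G c) (hu : u ∉ c) :
    (#{z ∈ c.toFinset | G.Adj u z} : ℝ) + 1 ≤ β * n := by
  have hT := hG.mul_card_sq_le_of_isIndepSet (hc.isIndepSet_insert_image_formPerm hu)
  rw [card_insert_of_notMem (fun h => ?_), card_image_of_injective _ c.formPerm.injective] at hT
  · push_cast at hT
    have : ((#{z ∈ c.toFinset | G.Adj u z} : ℝ) + 1) ^ 2 ≤ (β * n) ^ 2 := by nlinarith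
    exact (pow_le_pow_iff_left₀ (by positivity) (by positivity) two_ne_zero).mp this
  obtain ⟨z, hz, hzu⟩ := mem_image.mp h
  exact hu (hzu ▸ formPerm_apply_mem_of_mem (mem_toFinset.mp (Finset.mem_filter.mp hz).1))

theorem IsLongestCycleList.mem_of_graphDense [DecidableRel G.Adj]
    (hG : GraphDense G (d * β ^ 2) d) (hβ : 0 < β) (hβα : 4 * β ≤ α) (hβd : 2 * β ≤ d * α)
    (hdeg : ∀ v, α * n ≤ G.degree v) {c : List (Fin n)} (hc : IsLongestCycleList G c)
    (hlen : α * n ≤ c.length) (u : Fin n) : u ∈ c := by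
  by_contra hu
  have hn : (0 : ℝ) < n := Nat.cast_pos.mpr u.pos
  have hd : 0 < d := by nlinarith
  set C := c.toFinset
  have hnbr : ∀ w ∈ Cᶜ, (#{z ∈ C | G.Adj w z} : ℝ) ≤ β * n := fun w hw => by
    have := hc.card_adj_add_one_le hG hd hβ.le (by simpa [C] using hw)
    linarith
  have hC : α * n ≤ #C := by rwa [toFinset_card_of_nodup hc.nodup]
  have hU : α * n - β * n ≤ #Cᶜ := by
    have hsub : G.neighborFinset u ⊆ Cᶜ ∪ {z ∈ C | G.Adj u z} := fun z hz => by
      by_cases hzC : z ∈ C <;> simp_all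
    have hdeg_u : (G.degree u : ℝ) ≤ #Cᶜ + #{z ∈ C | G.Adj u z} := by
      rw [← G.card_neighborFinset_eq_degree]
      exact_mod_cast (card_le_card hsub).trans (card_union_le _ _)
    linarith [hdeg u, hnbr u (by simpa [C] using hu)]
  have hdense := hG.sub_le_card_mul_of_card_adj_le hnbr
  have hUC := mul_le_mul_of_nonneg_left hC (by positivity : (0 : ℝ) ≤ d * #Cᶜ)
  have hU' : (#Cᶜ : ℝ) * (d * α - β) ≤ d * β ^ 2 * n := by
    refine le_of_mul_le_mul_right ?_ hn
    nlinarith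
  have hUα : α * #Cᶜ ≤ 2 * β ^ 2 * n := by
    refine le_of_mul_le_mul_left ?_ hd
    nlinarith
  have hUβ : 3 * β * n ≤ #Cᶜ := by nlinarith
  nlinarith [mul_pos hβ hn]

theorem GraphDense.isHamiltonian [DecidableRel G.Adj] (hG : GraphDense G (d * β ^ 2) d)
    (hβ : 0 < β) (hβα : 4 * β ≤ α) (hβd : 2 * β ≤ d * α) (h2 : 2 ≤ α * n)
    (hdeg : ∀ v, α * n ≤ G.degree v) : G.IsHamiltonian := by
  have : Nonempty (Fin n) := ⟨⟨0, by exact_mod_cast (show (0 : ℝ) < n by nlinarith)⟩⟩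
  obtain ⟨v, c₀, hc₀, hv⟩ := exists_isCycleList_degree_lt fun v => by
    exact_mod_cast h2.trans (hdeg v)
  obtain ⟨c, hc⟩ := exists_isLongestCycleList hc₀
  have hlen : α * n ≤ c.length :=
    (hdeg v).trans (by exact_mod_cast hv.le.trans (hc.length_le c₀ hc₀))
  exact hc.isHamiltonian (hc.mem_of_graphDense hG hβ hβα hβd hdeg hlen)

end Dense

theorem statement_17 :
    ∀ α d : ℝ, 0 < α → 0 < d →
      ∃ ρ : ℝ, 0 < ρ ∧ ∃ n₀ : ℕ, ∀ n : ℕ, n₀ ≤ n →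
        ∀ (G : SimpleGraph (Fin n)) (_ : DecidableRel G.Adj),
          GraphDense G ρ d →
          (∀ v : Fin n, α * (n : ℝ) ≤ (G.degree v : ℝ)) →
          G.IsHamiltonian := by
  intro α d hα hd
  refine ⟨d * (α * min d 1 / 4) ^ 2, by positivity, ⌈2 / α⌉₊, fun n hn G _ hG hdeg =>
    hG.isHamiltonian (by positivity) ?_ ?_ ?_ hdeg⟩
  · linarith [mul_le_mul_of_nonneg_left (min_le_right d 1) hα.le]
  · nlinarith [mul_le_mul_of_nonneg_left (min_le_left d 1) hα.le]
  · rw [Nat.ceil_le, div_le_iff₀ hα] at hn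
    linarith
end
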